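/- arXiv:2308.14336 — 6 statements merged into one kernel-verified Lean document; each statement's English description precedes it below -/
import Mathlib

section
/- Let g : [0,∞) → ℝ be Borel measurable and bounded, and let C ≥ 0. Then the infimum of ∫ g dμ over all Borel probability measures μ on [0,∞) satisfying ∫ ξ dμ(ξ) ≤ C equals the infimum of p·g(ξ₁) + (1 − p)·g(ξ₂) over all p ∈ [0,1] and ξ₁, ξ₂ ∈ [0,∞) with p·ξ₁ + (1 − p)·ξ₂ ≤ C. -/
open MeasureTheory

-- a.e. nonnegativity from μ (Iio 0) = 0
lemma ae_nonneg_of_Iio {μ : Measure ℝ} (h : μ (Set.Iio 0) = 0) : ∀ᵐ ξ ∂μ, 0 ≤ ξ := by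
  rw [MeasureTheory.ae_iff]
  convert h using 2
  ext x
  simp [Set.Iio, not_le]

-- bounded measurable functions integrable wrt finite measures supported on [0,∞)
lemma integrable_of_bdd {g : ℝ → ℝ} (hmeas : Measurable g) {M : ℝ}
    (hbdd : ∀ ξ : ℝ, 0 ≤ ξ → |g ξ| ≤ M) {μ : Measure ℝ} [IsProbabilityMeasure μ]
    (h0 : μ (Set.Iio 0) = 0) : Integrable g μ := by
  refine Integrable.mono' (integrable_const M) hmeas.aestronglyMeasurable ?_
  filter_upwards [ae_nonneg_of_Iio h0] with x hx
  simpa using hbdd x hx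

-- integrable wrt dirac
lemma integrable_dirac' {f : ℝ → ℝ} (hf : Measurable f) (a : ℝ) :
    Integrable f (Measure.dirac a) := by
  refine (integrable_congr (MeasureTheory.ae_eq_dirac' hf (a := a))).mpr ?_
  exact integrable_const _

lemma two_point_integral {f : ℝ → ℝ} (hf : Measurable f) {p : ℝ} (hp0 : 0 ≤ p) (hp1 : p ≤ 1)
    (x y : ℝ) :
    ∫ ξ, f ξ ∂(ENNReal.ofReal p • Measure.dirac x + ENNReal.ofReal (1 - p) • Measure.dirac y)
      = p * f x + (1 - p) * f y := by
  rw [integral_add_measure, integral_smul_measure, integral_smul_measure,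
    integral_dirac, integral_dirac, ENNReal.toReal_ofReal hp0,
    ENNReal.toReal_ofReal (by linarith)]
  · simp only [smul_eq_mul]; try ring
  · exact (integrable_dirac' hf x).smul_measure ENNReal.ofReal_ne_top
  · exact (integrable_dirac' hf y).smul_measure ENNReal.ofReal_ne_top

theorem stmt3 (g : ℝ → ℝ) (hmeas : Measurable g)
    (M : ℝ) (hbdd : ∀ ξ : ℝ, 0 ≤ ξ → |g ξ| ≤ M)
    (C : ℝ) (hC : 0 ≤ C) :
    sInf {r : ℝ | ∃ μ : Measure ℝ, IsProbabilityMeasure μ ∧ μ (Set.Iio 0) = 0 ∧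
        Integrable (fun ξ : ℝ => ξ) μ ∧ (∫ ξ, ξ ∂μ) ≤ C ∧ r = ∫ ξ, g ξ ∂μ} =
    sInf {r : ℝ | ∃ p ξ₁ ξ₂ : ℝ, 0 ≤ p ∧ p ≤ 1 ∧ 0 ≤ ξ₁ ∧ 0 ≤ ξ₂ ∧
        p * ξ₁ + (1 - p) * ξ₂ ≤ C ∧ r = p * g ξ₁ + (1 - p) * g ξ₂} := by
  set A := {r : ℝ | ∃ μ : Measure ℝ, IsProbabilityMeasure μ ∧ μ (Set.Iio 0) = 0 ∧
        Integrable (fun ξ : ℝ => ξ) μ ∧ (∫ ξ, ξ ∂μ) ≤ C ∧ r = ∫ ξ, g ξ ∂μ} with hA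
  set B := {r : ℝ | ∃ p ξ₁ ξ₂ : ℝ, 0 ≤ p ∧ p ≤ 1 ∧ 0 ≤ ξ₁ ∧ 0 ≤ ξ₂ ∧
        p * ξ₁ + (1 - p) * ξ₂ ≤ C ∧ r = p * g ξ₁ + (1 - p) * g ξ₂} with hB
  -- B ⊆ A
  have hBA : B ⊆ A := by
    rintro r ⟨p, x, y, hp0, hp1, hx, hy, hcon, rfl⟩
    set μ : Measure ℝ := ENNReal.ofReal p • Measure.dirac x
        + ENNReal.ofReal (1 - p) • Measure.dirac y with hμ
    have hprob : IsProbabilityMeasure μ := by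
      constructor
      simp only [hμ, Measure.add_apply, Measure.smul_apply, smul_eq_mul,
        Measure.dirac_apply_of_mem (Set.mem_univ _), mul_one]
      rw [← ENNReal.ofReal_add hp0 (by linarith)]
      norm_num
    refine ⟨μ, hprob, ?_, ?_, ?_, ?_⟩
    · simp only [hμ, Measure.add_apply, Measure.smul_apply, smul_eq_mul]
      rw [Measure.dirac_apply' _ measurableSet_Iio, Measure.dirac_apply' _ measurableSet_Iio]
      rw [Set.indicator_of_notMem (by simpa using hx), Set.indicator_of_notMem (by simpa using hy)]
      simp
    · refine Integrable.add_measure ?_ ?_ <;>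
        exact ((integrable_dirac' (f := fun ξ : ℝ => ξ) measurable_id _)).smul_measure ENNReal.ofReal_ne_top
    · rw [two_point_integral (f := fun ξ : ℝ => ξ) measurable_id hp0 hp1]; exact hcon
    · rw [two_point_integral hmeas hp0 hp1]
  -- B nonempty
  have hBne : B.Nonempty := ⟨g 0, 1, 0, 0, zero_le_one, le_rfl, le_rfl, le_rfl, by simpa using hC, by ring⟩
  -- B bounded below
  have hBbdd : BddBelow B := by
    refine ⟨-M, ?_⟩
    rintro r ⟨p, x, y, hp0, hp1, hx, hy, hcon, rfl⟩
    have h1 := abs_le.mp (hbdd x hx)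
    have h2 := abs_le.mp (hbdd y hy)
    nlinarith [h1.1, h2.1]
  have hAbdd : BddBelow A := by
    refine ⟨-M, ?_⟩
    rintro r ⟨μ, hprob, h0, hint, hcon, rfl⟩
    have hg : Integrable g μ := integrable_of_bdd hmeas hbdd h0
    have : ∫ _, (-M) ∂μ ≤ ∫ ξ, g ξ ∂μ := by
      refine integral_mono_ae (integrable_const _) hg ?_
      filter_upwards [ae_nonneg_of_Iio h0] with ξ hξ
      exact (abs_le.mp (hbdd ξ hξ)).1
    simpa using this
  set I := sInf B with hI
  -- single points ≤ C : g ξ ≥ I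
  have hpoint : ∀ ξ : ℝ, 0 ≤ ξ → ξ ≤ C → I ≤ g ξ := by
    intro ξ h0 h1
    exact csInf_le hBbdd ⟨1, ξ, 0, by norm_num, by norm_num, h0, le_refl 0, by linarith, by ring⟩
  -- hard direction: I ≤ r for all r ∈ A
  have hmain : ∀ r ∈ A, I ≤ r := by
    rintro r ⟨μ, hprob, h0, hint, hcon, rfl⟩
    have hg : Integrable g μ := integrable_of_bdd hmeas hbdd h0
    have hae : ∀ᵐ ξ ∂μ, 0 ≤ ξ := ae_nonneg_of_Iio h0
    rcases eq_or_lt_of_le hC with hC0 | hC0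
    · -- C = 0 : ξ = 0 a.e.
      have hint_nonneg : 0 ≤ ∫ ξ, ξ ∂μ := integral_nonneg_of_ae hae
      have hzero : ∫ ξ, ξ ∂μ = 0 := le_antisymm (by linarith [hcon, hC0]) hint_nonneg
      have haez : ∀ᵐ ξ ∂μ, ξ = 0 := by
        have := (integral_eq_zero_iff_of_nonneg_ae hae hint).mp hzero
        filter_upwards [this] with ξ hξ using hξ
      have : ∫ ξ, g ξ ∂μ = g 0 := by
        have : (fun ξ => g ξ) =ᵐ[μ] fun _ => g 0 := by
          filter_upwards [haez] with ξ hξ; rw [hξ]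
        rw [integral_congr_ae this]; simp
      rw [this]
      exact hpoint 0 le_rfl hC
    · -- C > 0 : dual variable
      set L := {l : ℝ | ∃ x : ℝ, 0 ≤ x ∧ x < C ∧ l = (g x - I) / (C - x)} with hL
      have hLne : L.Nonempty := ⟨(g 0 - I) / (C - 0), 0, le_rfl, hC0, rfl⟩
      have hLbdd : BddBelow L := by
        refine ⟨0, ?_⟩
        rintro l ⟨x, hx0, hxC, rfl⟩
        exact div_nonneg (by linarith [hpoint x hx0 hxC.le]) (by linarith)
      set lam := sInf L with hlam
      have hlam0 : 0 ≤ lam := le_csInf hLne (by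
        rintro l ⟨x, hx0, hxC, rfl⟩
        exact div_nonneg (by linarith [hpoint x hx0 hxC.le]) (by linarith))
      -- pairing inequality gives: for ξ > C, (I - g ξ)/(ξ - C) is a lower bound of L
      have hpair : ∀ ξ : ℝ, C < ξ → ∀ x, 0 ≤ x → x < C →
          (I - g ξ) / (ξ - C) ≤ (g x - I) / (C - x) := by
        intro ξ hξ x hx0 hxC
        set p := (ξ - C) / (ξ - x) with hp
        have hden : 0 < ξ - x := by linarith
        have hp0 : 0 ≤ p := div_nonneg (by linarith) hden.le
        have hp1 : p ≤ 1 := by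
          rw [hp, div_le_one hden]; linarith
        have hmem : I ≤ p * g x + (1 - p) * g ξ := by
          refine csInf_le hBbdd ⟨p, x, ξ, hp0, hp1, hx0, by linarith, ?_, rfl⟩
          have : p * x + (1 - p) * ξ = C := by
            rw [hp]; field_simp
            ring
          linarith [this.le]
        have h1p : 1 - p = (C - x) / (ξ - x) := by
          rw [hp, eq_div_iff hden.ne']; field_simp; ring
        rw [div_le_div_iff₀ (by linarith) (by linarith)]
        have hpv : p * (ξ - x) = ξ - C := by rw [hp]; field_simp
        have h1pv : (1 - p) * (ξ - x) = C - x := by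
          rw [h1p]; field_simp
        have h := mul_le_mul_of_nonneg_right hmem hden.le
        have e1 : p * g x * (ξ - x) = (ξ - C) * g x := by rw [mul_right_comm, hpv]
        have e2 : (1 - p) * g ξ * (ξ - x) = (C - x) * g ξ := by rw [mul_right_comm, h1pv]
        have key : I * (ξ - x) ≤ (ξ - C) * g x + (C - x) * g ξ := by nlinarith [h, e1, e2]
        nlinarith [key]
      -- pointwise lower bound: g ξ + lam * ξ ≥ I + lam * C for all ξ ≥ 0
      have hpt : ∀ ξ : ℝ, 0 ≤ ξ → I + lam * C ≤ g ξ + lam * ξ := by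
        intro ξ hξ0
        rcases lt_trichotomy ξ C with h | h | h
        · have hle : lam ≤ (g ξ - I) / (C - ξ) := csInf_le hLbdd ⟨ξ, hξ0, h, rfl⟩
          have := (le_div_iff₀ (by linarith : (0:ℝ) < C - ξ)).mp hle
          linarith
        · subst h; linarith [hpoint ξ hξ0 le_rfl]
        · have hlb : (I - g ξ) / (ξ - C) ≤ lam := by
            apply le_csInf hLne
            rintro l ⟨x, hx0, hxC, rfl⟩
            exact hpair ξ h x hx0 hxC
          have := (div_le_iff₀ (by linarith : (0:ℝ) < ξ - C)).mp hlb
          nlinarith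
      -- integrate
      have hint2 : Integrable (fun ξ => g ξ + lam * ξ) μ := hg.add (hint.const_mul lam)
      have hmono : ∫ _, (I + lam * C) ∂μ ≤ ∫ ξ, (g ξ + lam * ξ) ∂μ := by
        refine integral_mono_ae (integrable_const _) hint2 ?_
        filter_upwards [hae] with ξ hξ using hpt ξ hξ
      rw [integral_const] at hmono
      simp only [measure_univ, probReal_univ, ENNReal.toReal_one, one_smul] at hmono
      rw [integral_add hg (hint.const_mul lam), integral_const_mul] at hmono
      nlinarith [hcon, hlam0, hmono]
  have h1 : sInf A ≤ sInf B := csInf_le_csInf hAbdd hBne hBA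
  have h2 : sInf B ≤ sInf A := le_csInf (hBne.mono hBA) hmain
  linarith
end

section
/- Fix α > 0 and P_FA ∈ (0, e^{−2}), and define f : [0,∞) → ℝ by f(P) = exp(ln(P_FA)/(1 + αP)). Then there exists a unique P_t > 0 satisfying f(P_t) − f(0) = f′(P_t) · P_t; moreover P_t > P*, where P* := (−ln(P_FA) − 2)/(2α). -/
open Real

lemma aux_hd (L t : ℝ) :
    HasDerivAt (fun s => Real.exp (L*s) * (1 + L*s*(1-s)) - Real.exp L)
      (Real.exp (L*t) * (L * ((1-t)*(2+L*t)))) t := by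
  have h1 : HasDerivAt (fun s : ℝ => Real.exp (L*s)) (Real.exp (L*t) * L) t := by
    simpa [mul_comm] using ((hasDerivAt_id t).const_mul L).exp
  have h2 : HasDerivAt (fun s : ℝ => 1 + L*s*(1-s)) (L*(1-t) + (L*t)*(-1)) t := by
    have ha : HasDerivAt (fun s : ℝ => L*s) L t := by
      simpa using (hasDerivAt_id t).const_mul L
    have hb : HasDerivAt (fun s : ℝ => 1-s) (-1 : ℝ) t := by
      simpa using (hasDerivAt_id t).const_sub 1
    simpa using (ha.mul hb).const_add 1
  have := (h1.mul h2).sub_const (Real.exp L)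
  exact this.congr_deriv (by ring)

lemma aux_fd (L α P : ℝ) (hu : 1 + α * P ≠ 0) :
    HasDerivAt (fun P : ℝ => Real.exp (L / (1 + α * P)))
      (Real.exp (L * (1+α*P)⁻¹) * (L * (-α/(1+α*P)^2))) P := by
  have h0 : HasDerivAt (fun P : ℝ => 1 + α * P) α P := by
    simpa using ((hasDerivAt_id P).const_mul α).const_add 1
  have h1 : HasDerivAt (fun P : ℝ => (1 + α * P)⁻¹) (-α/(1+α*P)^2) P := h0.inv hu
  have h2 := (h1.const_mul L).exp
  simp only [div_eq_mul_inv]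
  exact h2

theorem stmt10 (α PFA : ℝ) (hα : 0 < α) (hPFA0 : 0 < PFA) (hPFA1 : PFA < Real.exp (-2))
    (f : ℝ → ℝ) (hf : f = fun P : ℝ => Real.exp (Real.log PFA / (1 + α * P)))
    (Pstar : ℝ) (hPstar : Pstar = (-Real.log PFA - 2) / (2 * α)) :
    (∃! Pt : ℝ, 0 < Pt ∧ f Pt - f 0 = deriv f Pt * Pt) ∧
    (∀ Pt : ℝ, 0 < Pt → f Pt - f 0 = deriv f Pt * Pt → Pstar < Pt) := by
  subst hf hPstar
  set L := Real.log PFA with hLdef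
  have hL2 : L < -2 := by
    have h := Real.log_lt_log hPFA0 hPFA1
    rwa [Real.log_exp] at h
  have hLneg : L < 0 := by linarith
  have hLne : L ≠ 0 := ne_of_lt hLneg
  set h : ℝ → ℝ := fun s => Real.exp (L*s) * (1 + L*s*(1-s)) - Real.exp L with hhdef
  have hcont : Continuous h := by
    apply Continuous.sub
    · exact (Real.continuous_exp.comp (continuous_const.mul continuous_id)).mul (by continuity)
    · exact continuous_const
  -- key point m := -2/L ∈ (0,1)
  set m : ℝ := -2 / L with hmdef
  have hm0 : 0 < m := by
    rw [hmdef]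
    exact div_pos_of_neg_of_neg (by norm_num) hLneg
  have hm1 : m < 1 := by
    rw [hmdef, div_lt_one_of_neg hLneg]
    linarith
  have hLm : L * m = -2 := by
    rw [hmdef]; field_simp
  -- h 1 = 0, h 0 > 0
  have hh1 : h 1 = 0 := by simp [hhdef]
  have hh0 : 0 < h 0 := by
    have h1 : Real.exp L < 1 := Real.exp_lt_one_iff.mpr hLneg
    have : h 0 = 1 - Real.exp L := by simp [hhdef]
    rw [this]; linarith
  -- monotonicity
  have hmono : StrictMonoOn h (Set.Icc m 1) := by
    apply strictMonoOn_of_deriv_pos (convex_Icc m 1) hcont.continuousOn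
    intro x hx
    rw [interior_Icc] at hx
    rw [(aux_hd L x).deriv]
    have hx1 : x < 1 := hx.2
    have hLx : L * x < -2 := by
      have := mul_lt_mul_of_neg_left hx.1 hLneg
      rwa [hLm] at this
    have he : 0 < Real.exp (L*x) := Real.exp_pos _
    have hpos : 0 < L * ((1-x)*(2+L*x)) :=
      mul_pos_of_neg_of_neg hLneg (mul_neg_of_pos_of_neg (by linarith) (by linarith))
    exact mul_pos he hpos
  have hanti : StrictAntiOn h (Set.Icc 0 m) := by
    apply strictAntiOn_of_deriv_neg (convex_Icc 0 m) hcont.continuousOn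
    intro x hx
    rw [interior_Icc] at hx
    rw [(aux_hd L x).deriv]
    have hx1 : x < 1 := lt_trans hx.2 hm1
    have hLx : -2 < L * x := by
      have := mul_lt_mul_of_neg_left hx.2 hLneg
      rwa [hLm] at this
    have he : 0 < Real.exp (L*x) := Real.exp_pos _
    have hneg : L * ((1-x)*(2+L*x)) < 0 :=
      mul_neg_of_neg_of_pos hLneg (mul_pos (by linarith) (by linarith))
    exact mul_neg_of_pos_of_neg he hneg
  have hhm : h m < 0 := by
    have := hmono (Set.left_mem_Icc.mpr hm1.le) (Set.right_mem_Icc.mpr hm1.le) hm1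
    rwa [hh1] at this
  -- existence of the zero t₀ of h in (0, m)
  obtain ⟨t₀, ht₀mem, ht₀⟩ : ∃ t₀ ∈ Set.Icc (0:ℝ) m, h t₀ = 0 := by
    have := intermediate_value_Icc' hm0.le hcont.continuousOn
    have h0m : (0:ℝ) ∈ Set.Icc (h m) (h 0) := ⟨hhm.le, hh0.le⟩
    obtain ⟨t₀, ht, he⟩ := this h0m
    exact ⟨t₀, ht, he⟩
  have ht₀0 : 0 < t₀ := by
    rcases lt_or_eq_of_le ht₀mem.1 with h' | h'
    · exact h'
    · exfalso; rw [← h'] at ht₀; linarith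
  have ht₀m : t₀ < m := by
    rcases lt_or_eq_of_le ht₀mem.2 with h' | h'
    · exact h'
    · exfalso; rw [h'] at ht₀; linarith
  have ht₀1 : t₀ < 1 := lt_trans ht₀m hm1
  -- any zero of h in (0,1) lies in (0,m) and equals t₀
  have hzero_lt : ∀ s, 0 < s → s < 1 → h s = 0 → s < m := by
    intro s hs0 hs1 hs
    by_contra hns
    push_neg at hns
    have := hmono (Set.mem_Icc.mpr ⟨hns, hs1.le⟩) (Set.right_mem_Icc.mpr hm1.le) hs1
    rw [hh1, hs] at this
    exact lt_irrefl _ this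
  have huniq : ∀ s, 0 < s → s < 1 → h s = 0 → s = t₀ := by
    intro s hs0 hs1 hs
    have hsm := hzero_lt s hs0 hs1 hs
    exact hanti.injOn (Set.mem_Icc.mpr ⟨hs0.le, hsm.le⟩)
      (Set.mem_Icc.mpr ⟨ht₀0.le, ht₀m.le⟩) (by rw [hs, ht₀])
  -- translation between P and t
  have hkey : ∀ P : ℝ, 0 < P →
      ((fun P : ℝ => Real.exp (L / (1 + α * P))) P
        - (fun P : ℝ => Real.exp (L / (1 + α * P))) 0
        = deriv (fun P : ℝ => Real.exp (L / (1 + α * P))) P * P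
        ↔ h (1 + α * P)⁻¹ = 0) := by
    intro P hP
    have hu : 0 < 1 + α * P := by positivity
    have hd := (aux_fd L α P hu.ne').deriv
    rw [hd]
    beta_reduce
    have hf0 : Real.exp (L / (1 + α * 0)) = Real.exp L := by norm_num
    rw [hf0]
    have heq : h (1 + α * P)⁻¹ =
        Real.exp (L / (1 + α * P)) - Real.exp L
          - Real.exp (L * (1+α*P)⁻¹) * (L * (-α/(1+α*P)^2)) * P := by
      simp only [hhdef, div_eq_mul_inv]
      have hune : (1 + α * P) ≠ 0 := hu.ne'
      field_simp
      ring
    constructor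
    · intro he; rw [heq]; linarith
    · intro he; rw [heq] at he; linarith
  -- the tangent point
  set Pt : ℝ := (1 - t₀) / (α * t₀) with hPtdef
  have hPt0 : 0 < Pt := by
    apply div_pos (by linarith) (by positivity)
  have hPtu : 1 + α * Pt = t₀⁻¹ := by
    rw [hPtdef]
    field_simp [ht₀0.ne']
    ring
  have hPtt : (1 + α * Pt)⁻¹ = t₀ := by rw [hPtu, inv_inv]
  constructor
  · refine ⟨Pt, ⟨hPt0, ?_⟩, ?_⟩
    · rw [hkey Pt hPt0, hPtt]; exact ht₀
    · rintro P' ⟨hP'0, hP'⟩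
      rw [hkey P' hP'0] at hP'
      have hu' : (0:ℝ) < 1 + α * P' := by positivity
      have ht' : (1 + α * P')⁻¹ = t₀ := by
        apply huniq
        · positivity
        · rw [inv_lt_one_iff₀]; right; nlinarith
        · exact hP'
      have : 1 + α * P' = 1 + α * Pt := by
        rw [hPtu, ← ht', inv_inv]
      have := mul_left_cancel₀ hα.ne' (by linarith : α * P' = α * Pt)
      linarith
  · intro P' hP'0 hP'
    rw [hkey P' hP'0] at hP'
    have hu' : (0:ℝ) < 1 + α * P' := by positivity
    have hs1 : (1 + α * P')⁻¹ < 1 := by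
      rw [inv_lt_one_iff₀]; right; nlinarith
    have hsm := hzero_lt _ (by positivity) hs1 hP'
    -- (1+αP')⁻¹ < -2/L  ⇒  1+αP' > -L/2  ⇒  P' > (-L-2)/(2α)
    have hinv : -L/2 < 1 + α * P' := by
      have h1 : (0:ℝ) < (1 + α * P')⁻¹ := by positivity
      have h2 : m⁻¹ < ((1 + α * P')⁻¹)⁻¹ := by
        exact (inv_strictAnti₀ h1 hsm)
      rw [inv_inv] at h2
      have hmi : m⁻¹ = -L/2 := by
        rw [hmdef]; field_simp
      linarith [hmi ▸ h2]
    rw [div_lt_iff₀ (by positivity : (0:ℝ) < 2*α)]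
    nlinarith
end

section
/- Fix α > 0 and P_FA ∈ (0, e^{−2}), define f : [0,∞) → ℝ by f(P) = exp(ln(P_FA)/(1 + αP)), let P_t > 0 be the unique positive real with f(P_t) − f(0) = f′(P_t)·P_t, and set λ_t := (f(P_t) − f(0))/P_t. Then f(P) ≤ f(0) + λ_t·P for every P ≥ 0, with equality if and only if P = 0 or P = P_t. -/
theorem stmt11 (α PFA : ℝ) (hα : 0 < α) (hPFA0 : 0 < PFA) (hPFA1 : PFA < Real.exp (-2))
    (f : ℝ → ℝ) (hf : f = fun P : ℝ => Real.exp (Real.log PFA / (1 + α * P)))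
    (Pt : ℝ) (hPt : 0 < Pt) (htangent : f Pt - f 0 = deriv f Pt * Pt)
    (lamt : ℝ) (hlamt : lamt = (f Pt - f 0) / Pt) :
    ∀ P : ℝ, 0 ≤ P →
      f P ≤ f 0 + lamt * P ∧ (f P = f 0 + lamt * P ↔ P = 0 ∨ P = Pt) := by
  set L := Real.log PFA with hLdef
  have hL : L < -2 := by
    have h := Real.log_lt_log hPFA0 hPFA1
    rwa [Real.log_exp] at h
  have hLneg : L < 0 := by linarith
  have hspos : ∀ P : ℝ, 0 ≤ P → 0 < 1 + α * P := by
    intro P hP; nlinarith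
  set F1 : ℝ → ℝ := fun P => Real.exp (L / (1 + α * P)) * (-(L * α) / (1 + α * P) ^ 2)
    with hF1def
  set F2 : ℝ → ℝ := fun P =>
    Real.exp (L / (1 + α * P)) * (α ^ 2 * L * (L + 2 * (1 + α * P)) / (1 + α * P) ^ 4)
    with hF2def
  have hlin : ∀ P : ℝ, HasDerivAt (fun x : ℝ => 1 + α * x) α P := by
    intro P
    simpa using ((hasDerivAt_id P).const_mul α).const_add 1
  have hinner : ∀ P : ℝ, (1 + α * P) ≠ 0 →
      HasDerivAt (fun x : ℝ => L / (1 + α * x)) (-(L * α) / (1 + α * P) ^ 2) P := by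
    intro P hne
    have : HasDerivAt (fun x : ℝ => L / (1 + α * x)) _ P := (hasDerivAt_const P L).div (hlin P) hne
    convert this using 1
    ring
  have hDf : ∀ P : ℝ, (1 + α * P) ≠ 0 → HasDerivAt f (F1 P) P := by
    intro P hne
    rw [hf]
    simpa [hF1def] using (hinner P hne).exp
  have hDF1 : ∀ P : ℝ, (1 + α * P) ≠ 0 → HasDerivAt F1 (F2 P) P := by
    intro P hne
    have hexp := (hinner P hne).exp
    have hden : HasDerivAt (fun x : ℝ => (1 + α * x) ^ 2) (2 * (1 + α * P) ^ 1 * α) P :=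
      (hlin P).pow 2
    have hne2 : (1 + α * P) ^ 2 ≠ 0 := pow_ne_zero _ hne
    have hq : HasDerivAt (fun x : ℝ => -(L * α) / (1 + α * x) ^ 2)
        ((0 * (1 + α * P) ^ 2 - -(L * α) * (2 * (1 + α * P) ^ 1 * α)) / ((1 + α * P) ^ 2) ^ 2) P :=
      (hasDerivAt_const P (-(L * α))).div hden hne2
    have h : HasDerivAt F1 _ P := hexp.mul hq
    convert h using 1
    simp only [hF2def]
    field_simp
    ring
  -- inflection point
  set Ps : ℝ := (-L / 2 - 1) / α with hPsdef
  have hPspos : 0 < Ps := div_pos (by linarith) hα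
  have hsPs : 1 + α * Ps = -L / 2 := by
    rw [hPsdef]
    field_simp
    ring
  have hF2pos : ∀ x ∈ Set.Ioo (0 : ℝ) Ps, 0 < F2 x := by
    intro x hx
    have hx0 : (0:ℝ) ≤ x := le_of_lt hx.1
    have hs := hspos x hx0
    have hslt : 1 + α * x < -L / 2 := by
      have := hx.2
      nlinarith [hsPs]
    have h2 : 0 < -(L + 2 * (1 + α * x)) := by linarith
    have hnum : 0 < α ^ 2 * L * (L + 2 * (1 + α * x)) := by
      nlinarith [mul_pos (mul_pos (pow_pos hα 2) (neg_pos.mpr hLneg)) h2]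
    have : 0 < α ^ 2 * L * (L + 2 * (1 + α * x)) / (1 + α * x) ^ 4 :=
      div_pos hnum (by positivity)
    exact mul_pos (Real.exp_pos _) this
  have hF2neg : ∀ x ∈ Set.Ioi Ps, F2 x < 0 := by
    intro x hx
    have hx0 : (0:ℝ) ≤ x := le_of_lt (lt_trans hPspos hx)
    have hs := hspos x hx0
    have hsgt : -L / 2 < 1 + α * x := by
      have := Set.mem_Ioi.mp hx
      nlinarith [hsPs]
    have h2 : 0 < L + 2 * (1 + α * x) := by linarith
    have hnum : α ^ 2 * L * (L + 2 * (1 + α * x)) < 0 := by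
      nlinarith [mul_pos (mul_pos (pow_pos hα 2) h2) (neg_pos.mpr hLneg)]
    have : α ^ 2 * L * (L + 2 * (1 + α * x)) / (1 + α * x) ^ 4 < 0 :=
      div_neg_of_neg_of_pos hnum (by positivity)
    exact mul_neg_of_pos_of_neg (Real.exp_pos _) this
  have hcontF1 : ∀ s : Set ℝ, s ⊆ Set.Ici 0 → ContinuousOn F1 s := by
    intro s hs x hx
    exact ((hDF1 x (ne_of_gt (hspos x (hs hx)))).differentiableAt.continuousAt).continuousWithinAt
  have hMonoF1 : StrictMonoOn F1 (Set.Icc 0 Ps) := by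
    apply strictMonoOn_of_deriv_pos (convex_Icc _ _)
      (hcontF1 _ (fun x hx => hx.1))
    intro x hx
    rw [interior_Icc] at hx
    rw [(hDF1 x (ne_of_gt (hspos x (le_of_lt hx.1)))).deriv]
    exact hF2pos x hx
  have hAntiF1 : StrictAntiOn F1 (Set.Ici Ps) := by
    apply strictAntiOn_of_deriv_neg (convex_Ici _)
      (hcontF1 _ (fun x hx => le_trans (le_of_lt hPspos) hx))
    intro x hx
    rw [interior_Ici] at hx
    rw [(hDF1 x (ne_of_gt (hspos x (le_of_lt (lt_trans hPspos hx))))).deriv]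
    exact hF2neg x hx
  -- tangency discriminant function
  set φ : ℝ → ℝ := fun P => f P - f 0 - F1 P * P with hφdef
  have hDφ : ∀ P : ℝ, (1 + α * P) ≠ 0 → HasDerivAt φ (-(F2 P * P)) P := by
    intro P hne
    have h : HasDerivAt φ _ P := ((hDf P hne).sub_const (f 0)).sub ((hDF1 P hne).mul (hasDerivAt_id P))
    convert h using 1
    try simp only [id_eq]
    ring
  have hAntiφ : StrictAntiOn φ (Set.Icc 0 Ps) := by
    apply strictAntiOn_of_deriv_neg (convex_Icc _ _)
    · intro x hx
      exact ((hDφ x (ne_of_gt (hspos x hx.1))).differentiableAt.continuousAt).continuousWithinAt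
    · intro x hx
      rw [interior_Icc] at hx
      rw [(hDφ x (ne_of_gt (hspos x (le_of_lt hx.1)))).deriv]
      have := hF2pos x hx
      nlinarith [hx.1]
  have hφ0 : φ 0 = 0 := by simp [hφdef]
  have hderivfPt : deriv f Pt = F1 Pt := (hDf Pt (ne_of_gt (hspos Pt (le_of_lt hPt)))).deriv
  have hφPt : φ Pt = 0 := by
    simp only [hφdef]
    rw [← hderivfPt]
    linarith [htangent]
  have hPtgt : Ps < Pt := by
    by_contra hcon
    push_neg at hcon
    have : φ Pt < φ 0 :=
      hAntiφ (Set.mem_Icc.mpr ⟨le_refl 0, le_of_lt hPspos⟩)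
        (Set.mem_Icc.mpr ⟨le_of_lt hPt, hcon⟩) hPt
    rw [hφ0, hφPt] at this
    exact lt_irrefl 0 this
  have hlamF : lamt = F1 Pt := by
    rw [hlamt, htangent, hderivfPt, mul_div_assoc, div_self (ne_of_gt hPt), mul_one]
  -- gap function
  set g : ℝ → ℝ := fun P => f P - f 0 - F1 Pt * P with hgdef
  have hDg : ∀ P : ℝ, (1 + α * P) ≠ 0 → HasDerivAt g (F1 P - F1 Pt) P := by
    intro P hne
    have h : HasDerivAt g _ P := ((hDf P hne).sub_const (f 0)).sub ((hasDerivAt_id P).const_mul (F1 Pt))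
    convert h using 1
    try simp only [id_eq]
    ring
  have hcontg : ∀ s : Set ℝ, s ⊆ Set.Ici 0 → ContinuousOn g s := by
    intro s hs x hx
    exact ((hDg x (ne_of_gt (hspos x (hs hx)))).differentiableAt.continuousAt).continuousWithinAt
  have hg0 : g 0 = 0 := by simp [hgdef]
  have hgPt : g Pt = 0 := by
    simp only [hgdef]
    rw [← hderivfPt]
    linarith [htangent]
  have hPtmem : Pt ∈ Set.Ici Ps := le_of_lt hPtgt
  -- g strictly increasing on [Ps, Pt]
  have hMonog : StrictMonoOn g (Set.Icc Ps Pt) := by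
    apply strictMonoOn_of_deriv_pos (convex_Icc _ _)
      (hcontg _ (fun x hx => le_trans (le_of_lt hPspos) hx.1))
    intro x hx
    rw [interior_Icc] at hx
    have hx0 : (0:ℝ) ≤ x := le_of_lt (lt_trans hPspos hx.1)
    rw [(hDg x (ne_of_gt (hspos x hx0))).deriv]
    have : F1 Pt < F1 x := hAntiF1 (le_of_lt hx.1) hPtmem hx.2
    linarith
  have hgPs : g Ps < 0 := by
    have := hMonog (Set.mem_Icc.mpr ⟨le_refl Ps, le_of_lt hPtgt⟩)
      (Set.mem_Icc.mpr ⟨le_of_lt hPtgt, le_refl Pt⟩) hPtgt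
    rw [hgPt] at this
    exact this
  -- g strictly decreasing on [Pt, ∞)
  have hAntig : StrictAntiOn g (Set.Ici Pt) := by
    apply strictAntiOn_of_deriv_neg (convex_Ici _)
      (hcontg _ (fun x hx => le_trans (le_of_lt hPt) hx))
    intro x hx
    rw [interior_Ici] at hx
    have hx0 : (0:ℝ) ≤ x := le_of_lt (lt_trans hPt hx)
    rw [(hDg x (ne_of_gt (hspos x hx0))).deriv]
    have : F1 x < F1 Pt := hAntiF1 hPtmem (Set.mem_Ici.mpr (le_trans (Set.mem_Ici.mp hPtmem) (le_of_lt hx))) hx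
    linarith
  -- main strict inequality
  have hmain : ∀ P : ℝ, 0 ≤ P → P ≠ 0 → P ≠ Pt → g P < 0 := by
    intro P hP h0 hne
    have hPpos : 0 < P := lt_of_le_of_ne hP (Ne.symm h0)
    rcases le_or_gt P Ps with hle | hgt
    · rcases eq_or_lt_of_le hle with heq | hlt
      · rw [heq]; exact hgPs
      · by_cases hc : F1 P ≤ F1 Pt
        · -- g strictly decreasing on [0, P]
          have hA : StrictAntiOn g (Set.Icc 0 P) := by
            apply strictAntiOn_of_deriv_neg (convex_Icc _ _)
              (hcontg _ (fun x hx => hx.1))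
            intro x hx
            rw [interior_Icc] at hx
            rw [(hDg x (ne_of_gt (hspos x (le_of_lt hx.1)))).deriv]
            have : F1 x < F1 P := hMonoF1
              (Set.mem_Icc.mpr ⟨le_of_lt hx.1, le_of_lt (lt_trans hx.2 hlt)⟩)
              (Set.mem_Icc.mpr ⟨hP, hle⟩) hx.2
            linarith
          have := hA (Set.mem_Icc.mpr ⟨le_refl 0, hP⟩)
            (Set.mem_Icc.mpr ⟨hP, le_refl P⟩) hPpos
          rw [hg0] at this
          exact this
        · push_neg at hc
          -- g strictly increasing on [P, Ps]
          have hM : StrictMonoOn g (Set.Icc P Ps) := by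
            apply strictMonoOn_of_deriv_pos (convex_Icc _ _)
              (hcontg _ (fun x hx => le_trans hP hx.1))
            intro x hx
            rw [interior_Icc] at hx
            have hx0 : (0:ℝ) ≤ x := le_trans hP (le_of_lt hx.1)
            rw [(hDg x (ne_of_gt (hspos x hx0))).deriv]
            have : F1 P < F1 x := hMonoF1 (Set.mem_Icc.mpr ⟨hP, hle⟩)
              (Set.mem_Icc.mpr ⟨hx0, le_of_lt hx.2⟩) hx.1
            linarith
          have := hM (Set.mem_Icc.mpr ⟨le_refl P, hle⟩)
            (Set.mem_Icc.mpr ⟨hle, le_refl Ps⟩) hlt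
          linarith [hgPs]
    · rcases lt_trichotomy P Pt with h1 | h1 | h1
      · have := hMonog (Set.mem_Icc.mpr ⟨le_of_lt hgt, le_of_lt h1⟩)
          (Set.mem_Icc.mpr ⟨le_of_lt hPtgt, le_refl Pt⟩) h1
        rw [hgPt] at this
        exact this
      · exact absurd h1 hne
      · have := hAntig (Set.mem_Ici.mpr (le_refl Pt)) (Set.mem_Ici.mpr (le_of_lt h1)) h1
        rw [hgPt] at this
        exact this
  -- conclude
  intro P hP
  have hgform : g P = f P - (f 0 + lamt * P) := by
    simp only [hgdef, hlamF]; ring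
  constructor
  · by_cases h0 : P = 0
    · subst h0; simp
    · by_cases hne : P = Pt
      · subst hne
        linarith [hgform, hgPt]
      · have := hmain P hP h0 hne
        rw [hgform] at this
        linarith
  · constructor
    · intro heq
      by_contra hcon
      push_neg at hcon
      have := hmain P hP hcon.1 hcon.2
      rw [hgform, heq] at this
      simp at this
    · rintro (rfl | rfl)
      · simp
      · linarith [hgform, hgPt]
end

section
/- Fix α > 0 and P_FA ∈ (0, e^{−2}), define f : [0,∞) → ℝ by f(P) = exp(ln(P_FA)/(1 + αP)), and let P_t > 0 be the unique positive real with f(P_t) − f(0) = f′(P_t)·P_t. Then for P₀ ≥ 0, there exists λ ≥ 0 such that P₀ maximizes P ↦ f(P) − λ·P over [0,∞) if and only if P₀ = 0 or P₀ ≥ P_t. In other words, the set of powers achievable by scalarization equals {0} ∪ [P_t, ∞). -/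
theorem stmt12 (α PFA : ℝ) (hα : 0 < α) (hPFA0 : 0 < PFA) (hPFA1 : PFA < Real.exp (-2))
    (f : ℝ → ℝ) (hf : f = fun P : ℝ => Real.exp (Real.log PFA / (1 + α * P)))
    (Pt : ℝ) (hPt : 0 < Pt) (htangent : f Pt - f 0 = deriv f Pt * Pt) :
    ∀ P₀ : ℝ, 0 ≤ P₀ →
      ((∃ lam : ℝ, 0 ≤ lam ∧ ∀ P : ℝ, 0 ≤ P → f P - lam * P ≤ f P₀ - lam * P₀) ↔
        (P₀ = 0 ∨ Pt ≤ P₀)) := by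
  obtain ⟨L, hLdef⟩ : ∃ L : ℝ, L = Real.log PFA := ⟨_, rfl⟩
  have hFdef : f = fun P : ℝ => Real.exp (L / (1 + α * P)) := by rw [hf, hLdef]
  clear hf
  have hL2 : L < -2 := by
    have h := Real.log_lt_log hPFA0 hPFA1
    rwa [Real.log_exp, ← hLdef] at h
  have hL0 : L < 0 := by linarith
  obtain ⟨c, hcdef⟩ : ∃ c : ℝ, c = (-L - 2) / (2 * α) := ⟨_, rfl⟩
  have hc0 : 0 < c := by rw [hcdef]; exact div_pos (by linarith) (by linarith)
  have hc1 : 1 + α * c = -L / 2 := by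
    rw [hcdef]; field_simp; ring
  have hτval : (1 + α * c)⁻¹ = -2 / L := by
    rw [hc1, inv_div, div_neg, ← neg_div]
  have hτpos : 0 < -2 / L := by
    rw [div_pos_iff]; right; constructor <;> linarith
  obtain ⟨s, hsdef⟩ : ∃ s : ℝ → ℝ,
      s = fun x => Real.exp (L / (1 + α * x)) * (-(L * α) / (1 + α * x) ^ 2) := ⟨_, rfl⟩
  have hpos : ∀ x : ℝ, 0 ≤ x → 0 < 1 + α * x := by
    intro x hx; nlinarith
  have hderiv : ∀ x : ℝ, 0 < 1 + α * x → HasDerivAt f (s x) x := by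
    intro x hx
    have h1 : HasDerivAt (fun y : ℝ => 1 + α * y) α x := by
      simpa using ((hasDerivAt_id x).const_mul α).const_add 1
    have h2 : HasDerivAt (fun y : ℝ => L * (1 + α * y)⁻¹) (L * (-α / (1 + α * x) ^ 2)) x :=
      (h1.inv hx.ne').const_mul L
    have h5 := h2.exp
    have hFeq : f = fun y : ℝ => Real.exp (L * (1 + α * y)⁻¹) := by
      rw [hFdef]
      funext y
      rw [div_eq_mul_inv]
    rw [hFeq]
    convert h5 using 1
    rw [hsdef]
    show Real.exp (L / (1 + α * x)) * (-(L * α) / (1 + α * x) ^ 2) = _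
    rw [div_eq_mul_inv L]
    ring
  have hspos : ∀ x : ℝ, 0 ≤ x → 0 < s x := by
    intro x hx
    have h1 := hpos x hx
    rw [hsdef]
    exact mul_pos (Real.exp_pos _) (div_pos (by nlinarith) (by positivity))
  obtain ⟨ψ, hψdef⟩ : ∃ ψ : ℝ → ℝ,
      ψ = fun t => -(L * α) * (t ^ 2 * Real.exp (L * t)) := ⟨_, rfl⟩
  have hψd : ∀ t : ℝ, HasDerivAt ψ (-(L * α) * ((2 * t + L * t ^ 2) * Real.exp (L * t))) t := by
    intro t
    have h1 : HasDerivAt (fun u : ℝ => u ^ 2) (2 * t) t := by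
      simpa using hasDerivAt_pow 2 t
    have h2 : HasDerivAt (fun u : ℝ => Real.exp (L * u)) (Real.exp (L * t) * L) t := by
      simpa using ((hasDerivAt_id t).const_mul L).exp
    have h3 := (h1.mul h2).const_mul (-(L * α))
    rw [hψdef]
    exact h3.congr_deriv (by ring)
  have hψderiv : ∀ t : ℝ, deriv ψ t = -(L * α) * ((2 * t + L * t ^ 2) * Real.exp (L * t)) :=
    fun t => (hψd t).deriv
  have hψcont : Continuous ψ := by
    rw [hψdef]
    exact continuous_const.mul ((continuous_pow 2).mul
      (Real.continuous_exp.comp (continuous_const.mul continuous_id)))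
  have hsψ : ∀ x : ℝ, 0 < 1 + α * x → s x = ψ (1 + α * x)⁻¹ := by
    intro x hx
    rw [hsdef, hψdef]
    show Real.exp (L / (1 + α * x)) * (-(L * α) / (1 + α * x) ^ 2)
      = -(L * α) * (((1 + α * x)⁻¹) ^ 2 * Real.exp (L * (1 + α * x)⁻¹))
    rw [div_eq_mul_inv L, inv_pow]
    field_simp
  have hLα : 0 < -(L * α) := by nlinarith
  have hmono1 : StrictAntiOn ψ (Set.Icc (-2 / L) 1) := by
    apply strictAntiOn_of_deriv_neg (convex_Icc _ _) hψcont.continuousOn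
    intro t ht
    rw [interior_Icc] at ht
    rw [hψderiv]
    have h1 : 0 < t := lt_trans hτpos ht.1
    have h2 : 2 + L * t < 0 := by
      have h3 := (div_lt_iff_of_neg hL0).mp ht.1
      linarith
    have h4 : (2 * t + L * t ^ 2) * Real.exp (L * t) < 0 :=
      mul_neg_of_neg_of_pos (by nlinarith) (Real.exp_pos _)
    exact mul_neg_of_pos_of_neg hLα h4
  have hmono2 : StrictMonoOn ψ (Set.Icc 0 (-2 / L)) := by
    apply strictMonoOn_of_deriv_pos (convex_Icc _ _) hψcont.continuousOn
    intro t ht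
    rw [interior_Icc] at ht
    rw [hψderiv]
    have h1 : 0 < t := ht.1
    have h2 : 0 < 2 + L * t := by
      have h3 := (lt_div_iff_of_neg hL0).mp ht.2
      linarith
    exact mul_pos hLα (mul_pos (by nlinarith) (Real.exp_pos _))
  have htmem_hi : ∀ x : ℝ, c ≤ x → (1 + α * x)⁻¹ ∈ Set.Icc (0 : ℝ) (-2 / L) := by
    intro x hx
    have h1 : 0 < 1 + α * x := hpos x (le_trans hc0.le hx)
    constructor
    · positivity
    · rw [← hτval]
      apply inv_anti₀ (by rw [hc1]; linarith)
      nlinarith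
  have htmem_lo : ∀ x : ℝ, 0 ≤ x → x ≤ c → (1 + α * x)⁻¹ ∈ Set.Icc (-2 / L) (1 : ℝ) := by
    intro x hx0 hxc
    have h1 : 0 < 1 + α * x := hpos x hx0
    constructor
    · rw [← hτval]
      apply inv_anti₀ h1
      nlinarith
    · rw [← inv_one]
      apply inv_anti₀ one_pos
      nlinarith
  have htanti : ∀ x y : ℝ, 0 ≤ x → x < y → (1 + α * y)⁻¹ < (1 + α * x)⁻¹ := by
    intro x y hx hxy
    apply inv_strictAnti₀ (hpos x hx)
    nlinarith
  have hsanti : ∀ x y : ℝ, c ≤ x → c ≤ y → x < y → s y < s x := by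
    intro x y hx hy hxy
    have hx0 : (0:ℝ) ≤ x := le_trans hc0.le hx
    have hy0 : (0:ℝ) ≤ y := le_trans hc0.le hy
    rw [hsψ x (hpos x hx0), hsψ y (hpos y hy0)]
    exact hmono2 (htmem_hi y hy) (htmem_hi x hx) (htanti x y hx0 hxy)
  have hsmono : ∀ x y : ℝ, 0 ≤ x → y ≤ c → x < y → s x < s y := by
    intro x y hx hy hxy
    rw [hsψ x (hpos x hx), hsψ y (hpos y (le_trans hx hxy.le))]
    exact hmono1 (htmem_lo y (le_trans hx hxy.le) hy) (htmem_lo x hx (by linarith))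
      (htanti x y hx hxy)
  have hcont : ∀ a b : ℝ, 0 ≤ a → ContinuousOn f (Set.Icc a b) := by
    intro a b ha x hx
    exact ((hderiv x (hpos x (le_trans ha hx.1))).continuousAt).continuousWithinAt
  have hmvt : ∀ a b : ℝ, 0 ≤ a → a < b →
      ∃ z ∈ Set.Ioo a b, s z = (f b - f a) / (b - a) := by
    intro a b ha hab
    exact exists_hasDerivAt_eq_slope f s hab (hcont a b ha)
      (fun x hx => hderiv x (hpos x (le_trans ha hx.1.le)))
  obtain ⟨m, hmdef⟩ : ∃ m : ℝ, m = s Pt := ⟨_, rfl⟩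
  have htangent' : f Pt - f 0 = m * Pt := by
    rw [hmdef, ← (hderiv Pt (hpos Pt hPt.le)).deriv]
    exact htangent
  have hmpos : 0 < m := by rw [hmdef]; exact hspos Pt hPt.le
  -- c < Pt
  have hcPt : c < Pt := by
    by_contra hle
    push_neg at hle
    obtain ⟨z, hz, hzeq⟩ := hmvt 0 Pt le_rfl hPt
    have h1 : s z < s Pt := hsmono z Pt hz.1.le hle hz.2
    have h2 : (f Pt - f 0) / (Pt - 0) = m := by
      rw [htangent', sub_zero]; field_simp
    rw [hzeq, h2, ← hmdef] at h1
    exact lt_irrefl _ h1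
  -- strictly increasing h := f - m·id on [c, Pt]
  have hIcc : ∀ x y : ℝ, c ≤ x → y ≤ Pt → x < y → f x - m * x < f y - m * y := by
    have key : StrictMonoOn (fun y => f y - m * y) (Set.Icc c Pt) := by
      apply strictMonoOn_of_deriv_pos (convex_Icc _ _)
      · exact (hcont c Pt hc0.le).sub (continuous_const.mul continuous_id).continuousOn
      · intro y hy
        rw [interior_Icc] at hy
        have hy0 : (0:ℝ) ≤ y := le_trans hc0.le hy.1.le
        have hdm : HasDerivAt (fun y : ℝ => m * y) m y := by
          simpa using (hasDerivAt_id y).const_mul m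
        have hd : HasDerivAt (fun y => f y - m * y) (s y - m) y :=
          (hderiv y (hpos y hy0)).sub hdm
        rw [hd.deriv]
        have h1 : s Pt < s y := hsanti y Pt hy.1.le (le_trans hy.1.le hy.2.le) hy.2
        rw [hmdef]; linarith
    intro x y hx hy hxy
    have h1 := key (Set.mem_Icc.mpr ⟨hx, by linarith⟩) (Set.mem_Icc.mpr ⟨by linarith, hy⟩) hxy
    simpa using h1
  have hFc : f c - m * c < f 0 := by
    have h1 := hIcc c Pt le_rfl le_rfl hcPt
    linarith [htangent']
  -- strict chord inequality on (0, Pt)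
  have hchord : ∀ x : ℝ, 0 < x → x < Pt → f x < f 0 + m * x := by
    intro x hx0 hxPt
    rcases le_or_gt c x with hcx | hxc
    · have h1 := hIcc x Pt hcx le_rfl hxPt
      linarith [htangent']
    · by_contra hcon
      push_neg at hcon
      obtain ⟨z₁, hz₁, hz₁eq⟩ := hmvt 0 x le_rfl hx0
      obtain ⟨z₂, hz₂, hz₂eq⟩ := hmvt x c hx0.le hxc
      have hm1 : m ≤ s z₁ := by
        rw [hz₁eq, le_div_iff₀ (by linarith)]
        linarith
      have hm2 : s z₂ < m := by
        rw [hz₂eq, div_lt_iff₀ (by linarith)]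
        linarith
      have h3 : s z₁ < s z₂ := hsmono z₁ z₂ hz₁.1.le hz₂.2.le (lt_trans hz₁.2 hz₂.1)
      linarith
  -- concave tangent bound on [c, ∞)
  have htang : ∀ x y : ℝ, c ≤ x → c ≤ y → f y ≤ f x + s x * (y - x) := by
    intro x y hx hy
    rcases lt_trichotomy x y with h | h | h
    · obtain ⟨z, hz, hzeq⟩ := hmvt x y (le_trans hc0.le hx) h
      have h1 : s z < s x := hsanti x z hx (le_trans hx hz.1.le) hz.1
      have hne : y - x ≠ 0 := sub_ne_zero.mpr (ne_of_gt h)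
      have h2 : f y - f x = s z * (y - x) := by
        rw [hzeq]; field_simp
      have h3 : s z * (y - x) ≤ s x * (y - x) :=
        mul_le_mul_of_nonneg_right h1.le (by linarith)
      linarith
    · rw [h]; simp
    · obtain ⟨z, hz, hzeq⟩ := hmvt y x (le_trans hc0.le hy) h
      have h1 : s x < s z := hsanti z x (le_trans hy hz.1.le) hx hz.2
      have hne : x - y ≠ 0 := sub_ne_zero.mpr (ne_of_gt h)
      have h2 : f x - f y = s z * (x - y) := by
        rw [hzeq]; field_simp
      have h3 : s x * (x - y) ≤ s z * (x - y) :=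
        mul_le_mul_of_nonneg_right h1.le (by linarith)
      linarith
  -- global line at 0
  have hglobal : ∀ P : ℝ, 0 ≤ P → f P ≤ f 0 + m * P := by
    intro P hP
    rcases lt_or_ge P Pt with h | h
    · rcases eq_or_lt_of_le hP with h0 | h0
      · rw [← h0]; simp
      · exact (hchord P h0 h).le
    · have h1 := htang Pt P hcPt.le (le_trans hcPt.le h)
      rw [← hmdef] at h1
      linarith [htangent']
  intro P₀ hP₀
  constructor
  · rintro ⟨lam, hlam, hmax⟩
    by_contra hcon
    push_neg at hcon
    obtain ⟨hne, hlt⟩ := hcon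
    have h0 : 0 < P₀ := lt_of_le_of_ne hP₀ (Ne.symm hne)
    have h1 := hmax 0 le_rfl
    have h2 := hmax Pt hPt.le
    simp only [mul_zero] at h1
    have h3 : f P₀ < f 0 + m * P₀ := hchord P₀ h0 hlt
    have h4 : f Pt = f 0 + m * Pt := by linarith [htangent']
    have h5 : lam < m := lt_of_mul_lt_mul_right (by linarith : lam * P₀ < m * P₀) hP₀
    have h6 : m < lam :=
      lt_of_mul_lt_mul_right (by linarith : m * (Pt - P₀) < lam * (Pt - P₀)) (by linarith)
    linarith
  · rintro (h0 | hge)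
    · refine ⟨m, hmpos.le, ?_⟩
      intro P hP
      rw [h0]
      simp only [mul_zero]
      have := hglobal P hP
      linarith
    · refine ⟨s P₀, (hspos P₀ hP₀).le, ?_⟩
      intro P hP
      rcases le_or_gt Pt P with h | h
      · have := htang P₀ P (le_trans hcPt.le hge) (le_trans hcPt.le h)
        linarith
      · have hB := hglobal P hP
        have hT := htang P₀ Pt (le_trans hcPt.le hge) hcPt.le
        have hsle : s P₀ ≤ m := by
          rcases eq_or_lt_of_le hge with he | he
          · rw [hmdef, he]
          · rw [hmdef]
            exact (hsanti Pt P₀ hcPt.le (le_trans hcPt.le hge) he).le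
        have h4 : f 0 + m * Pt ≤ f P₀ + s P₀ * (Pt - P₀) := by linarith [htangent']
        have h5 : s P₀ * (Pt - P) ≤ m * (Pt - P) :=
          mul_le_mul_of_nonneg_right hsle (by linarith)
        linarith
end

section
/- Fix α > 0 and P_FA ∈ (0, e^{−2}), define f : [0,∞) → ℝ by f(P) = exp(ln(P_FA)/(1 + αP)), and let P_t > 0 be the unique positive real with f(P_t) − f(0) = f′(P_t)·P_t. Then for every P with 0 < P < P_t, the measure μ* = (1 − P/P_t)·δ_0 + (P/P_t)·δ_{P_t} is the UNIQUE Borel probability measure on [0,∞) that maximizes ∫ f dμ subject to ∫ ξ dμ(ξ) ≤ P. -/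
namespace Stmt14Aux

noncomputable def F (α L : ℝ) (x : ℝ) : ℝ := Real.exp (L / (1 + α * x))
noncomputable def F1 (α L : ℝ) (x : ℝ) : ℝ :=
  Real.exp (L / (1 + α * x)) * (-(L * α) / (1 + α * x) ^ 2)
noncomputable def F2 (α L : ℝ) (x : ℝ) : ℝ :=
  Real.exp (L / (1 + α * x)) * (L * α ^ 2 * (L / (1 + α * x) + 2) / (1 + α * x) ^ 3)

lemma hasDerivAt_inner {α L x : ℝ} (hx : 1 + α * x ≠ 0) :
    HasDerivAt (fun y => L / (1 + α * y)) (-(L * α) / (1 + α * x) ^ 2) x := by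
  have h1 : HasDerivAt (fun y : ℝ => 1 + α * y) α x := by
    simpa using (hasDerivAt_id x).const_mul α |>.const_add 1
  have h2 := (h1.inv hx).const_mul L
  convert h2 using 1
  · rfl
  · rfl
  · funext y; simp [div_eq_mul_inv]
  · ring

lemma hasDerivAt_F {α L x : ℝ} (hx : 1 + α * x ≠ 0) :
    HasDerivAt (F α L) (F1 α L x) x := by
  unfold F F1
  simpa [mul_comm] using (hasDerivAt_inner (L := L) hx).exp

lemma hasDerivAt_F1 {α L x : ℝ} (hx : 1 + α * x ≠ 0) :
    HasDerivAt (F1 α L) (F2 α L x) x := by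
  have h1 : HasDerivAt (fun y : ℝ => 1 + α * y) α x := by
    simpa using (hasDerivAt_id x).const_mul α |>.const_add 1
  have hsq : HasDerivAt (fun y : ℝ => (1 + α * y) ^ 2) (2 * (1 + α * x) * α) x := by
    simpa [mul_comm, mul_assoc] using (h1.fun_pow 2)
  have hsqne : (1 + α * x) ^ 2 ≠ 0 := pow_ne_zero _ hx
  have h2 : HasDerivAt (fun y : ℝ => -(L * α) / (1 + α * y) ^ 2)
      (-(-(L * α)) * (2 * (1 + α * x) * α) / ((1 + α * x) ^ 2) ^ 2) x := by
    have := (hsq.inv hsqne).const_mul (-(L * α))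
    convert this using 1
    · rfl
    · rfl
    · funext y; simp [div_eq_mul_inv]
    · field_simp
  have h3 := ((hasDerivAt_inner (L := L) hx).exp).mul h2
  convert h3 using 1
  · rfl
  · rfl
  · rfl
  unfold F2
  field_simp

end Stmt14Aux

namespace Stmt14Aux2
open Stmt14Aux Set

noncomputable def G (α L Pt : ℝ) (x : ℝ) : ℝ := F α L 0 + F1 α L Pt * x - F α L x

lemma hasDerivAt_G {α L Pt x : ℝ} (hx : 1 + α * x ≠ 0) :
    HasDerivAt (G α L Pt) (F1 α L Pt - F1 α L x) x := by
  unfold G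
  simpa using (((hasDerivAt_id x).const_mul (F1 α L Pt)).const_add (F α L 0)).fun_sub
    (hasDerivAt_F hx)

lemma key (α L : ℝ) (hα : 0 < α) (hL : L < -2) (Pt : ℝ) (hPt : 0 < Pt)
    (htan : F α L Pt - F α L 0 = F1 α L Pt * Pt) :
    ∀ x, 0 ≤ x → 0 ≤ G α L Pt x ∧ (G α L Pt x = 0 → x = 0 ∨ x = Pt) := by
  have hs : ∀ x : ℝ, 0 ≤ x → (0 : ℝ) < 1 + α * x := by
    intro x hx; nlinarith
  set Pc : ℝ := (-L / 2 - 1) / α with hPcdef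
  have hPc : 0 < Pc := div_pos (by linarith) hα
  -- sign of F2
  have hF2pos : ∀ x, 0 < x → x < Pc → 0 < F2 α L x := by
    intro x hx0 hxPc
    have hsx : (0:ℝ) < 1 + α * x := hs x hx0.le
    have hlt : 1 + α * x < -L / 2 := by
      have := (lt_div_iff₀ hα).mp hxPc
      nlinarith
    have hratio : L / (1 + α * x) + 2 < 0 := by
      rw [div_add' _ _ _ (ne_of_gt hsx), div_neg_iff]
      right; constructor <;> nlinarith
    have h1 : L * α ^ 2 < 0 := mul_neg_of_neg_of_pos (by linarith) (by positivity)
    have : 0 < L * α ^ 2 * (L / (1 + α * x) + 2) / (1 + α * x) ^ 3 :=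
      div_pos (mul_pos_of_neg_of_neg h1 hratio) (by positivity)
    exact mul_pos (Real.exp_pos _) this
  have hF2neg : ∀ x, Pc < x → F2 α L x < 0 := by
    intro x hxPc
    have hx0 : 0 < x := lt_trans hPc hxPc
    have hsx : (0:ℝ) < 1 + α * x := hs x hx0.le
    have hgt : -L / 2 < 1 + α * x := by nlinarith [(div_lt_iff₀ hα).mp hxPc]
    have hratio : 0 < L / (1 + α * x) + 2 := by
      rw [div_add' _ _ _ (ne_of_gt hsx), div_pos_iff]
      left; constructor <;> nlinarith
    have h1 : L * α ^ 2 < 0 := mul_neg_of_neg_of_pos (by linarith) (by positivity)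
    have : L * α ^ 2 * (L / (1 + α * x) + 2) / (1 + α * x) ^ 3 < 0 :=
      div_neg_of_neg_of_pos (mul_neg_of_neg_of_pos h1 hratio) (by positivity)
    exact mul_neg_of_pos_of_neg (Real.exp_pos _) this
  have contF1 : ContinuousOn (F1 α L) (Ici 0) := fun x hx =>
    ((hasDerivAt_F1 (ne_of_gt (hs x hx))).continuousAt).continuousWithinAt
  have contG : ContinuousOn (G α L Pt) (Ici 0) := fun x hx =>
    ((hasDerivAt_G (ne_of_gt (hs x hx))).continuousAt).continuousWithinAt
  have m1 : StrictMonoOn (F1 α L) (Icc 0 Pc) := by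
    apply strictMonoOn_of_deriv_pos (convex_Icc _ _) (contF1.mono Icc_subset_Ici_self)
    intro x hx; rw [interior_Icc] at hx
    rw [(hasDerivAt_F1 (ne_of_gt (hs x hx.1.le))).deriv]
    exact hF2pos x hx.1 hx.2
  have m2 : StrictAntiOn (F1 α L) (Ici Pc) := by
    apply strictAntiOn_of_deriv_neg (convex_Ici _) (contF1.mono (Ici_subset_Ici.2 hPc.le))
    intro x hx; rw [interior_Ici] at hx
    rw [(hasDerivAt_F1 (ne_of_gt (hs x (le_trans hPc.le (le_of_lt hx))))).deriv]
    exact hF2neg x hx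
  have hG0 : G α L Pt 0 = 0 := by simp [G]
  have hGPt : G α L Pt Pt = 0 := by simp only [G]; linarith
  have hPcPt : Pc < Pt := by
    by_contra hcon; push_neg at hcon
    have mono : StrictMonoOn (G α L Pt) (Icc 0 Pt) := by
      apply strictMonoOn_of_deriv_pos (convex_Icc _ _)
        (contG.mono (Icc_subset_Ici_self))
      intro x hx; rw [interior_Icc] at hx
      rw [(hasDerivAt_G (ne_of_gt (hs x hx.1.le))).deriv]
      have : F1 α L x < F1 α L Pt :=
        m1 ⟨hx.1.le, le_trans hx.2.le hcon⟩ ⟨hPt.le, hcon⟩ hx.2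
      linarith
    have := mono (left_mem_Icc.2 hPt.le) (right_mem_Icc.2 hPt.le) hPt
    rw [hG0, hGPt] at this; exact lt_irrefl 0 this
  have GposA : ∀ x, Pc ≤ x → x < Pt → 0 < G α L Pt x := by
    intro x hx1 hx2
    have gA : StrictAntiOn (G α L Pt) (Icc Pc Pt) := by
      apply strictAntiOn_of_deriv_neg (convex_Icc _ _)
        (contG.mono (fun z hz => le_trans hPc.le hz.1))
      intro y hy; rw [interior_Icc] at hy
      rw [(hasDerivAt_G (ne_of_gt (hs y (le_trans hPc.le hy.1.le)))).deriv]
      have : F1 α L Pt < F1 α L y := m2 (le_of_lt hy.1) (le_of_lt (lt_trans hy.1 hy.2) |>.trans (le_refl _) |> fun h => h) hy.2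
      linarith
    have := gA ⟨hx1, hx2.le⟩ (right_mem_Icc.2 (le_trans hx1 hx2.le)) hx2
    rw [hGPt] at this; exact this
  have GposB : ∀ x, Pt < x → 0 < G α L Pt x := by
    intro x hx
    have gB : StrictMonoOn (G α L Pt) (Ici Pt) := by
      apply strictMonoOn_of_deriv_pos (convex_Ici _)
        (contG.mono (Ici_subset_Ici.2 hPt.le))
      intro y hy; rw [interior_Ici] at hy
      rw [(hasDerivAt_G (ne_of_gt (hs y (le_trans hPt.le hy.le)))).deriv]
      have : F1 α L y < F1 α L Pt := m2 hPcPt.le (le_trans hPcPt.le hy.le) hy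
      linarith
    have := gB (self_mem_Ici) (le_of_lt hx) hx
    rw [hGPt] at this; exact this
  have GposC : ∀ y, 0 < y → y < Pc → 0 < G α L Pt y := by
    intro y hy0 hyPc
    by_contra hcon; push_neg at hcon
    rcases le_or_gt (F1 α L y) (F1 α L Pt) with hc | hc
    · have mono : StrictMonoOn (G α L Pt) (Icc 0 y) := by
        apply strictMonoOn_of_deriv_pos (convex_Icc _ _)
          (contG.mono (Icc_subset_Ici_self))
        intro x hx; rw [interior_Icc] at hx
        rw [(hasDerivAt_G (ne_of_gt (hs x hx.1.le))).deriv]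
        have : F1 α L x < F1 α L y :=
          m1 ⟨hx.1.le, le_trans hx.2.le hyPc.le⟩ ⟨hy0.le, hyPc.le⟩ hx.2
        linarith
      have := mono (left_mem_Icc.2 hy0.le) (right_mem_Icc.2 hy0.le) hy0
      rw [hG0] at this; linarith
    · have anti : StrictAntiOn (G α L Pt) (Icc y Pc) := by
        apply strictAntiOn_of_deriv_neg (convex_Icc _ _)
          (contG.mono (fun z hz => le_trans hy0.le hz.1))
        intro x hx; rw [interior_Icc] at hx
        rw [(hasDerivAt_G (ne_of_gt (hs x (le_trans hy0.le hx.1.le)))).deriv]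
        have : F1 α L y < F1 α L x :=
          m1 ⟨hy0.le, hyPc.le⟩ ⟨le_trans hy0.le hx.1.le, hx.2.le⟩ hx.1
        linarith
      have := anti (left_mem_Icc.2 hyPc.le) (right_mem_Icc.2 hyPc.le) hyPc
      have hGPc := GposA Pc (le_refl _) hPcPt
      linarith
  intro x hx
  rcases eq_or_lt_of_le hx with h0 | h0
  · exact ⟨le_of_eq (h0 ▸ hG0.symm), fun _ => Or.inl h0.symm⟩
  · have hpos : x = Pt ∨ 0 < G α L Pt x := by
      rcases lt_trichotomy x Pt with h | h | h
      · right
        rcases lt_or_ge x Pc with h2 | h2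
        · exact GposC x h0 h2
        · exact GposA x h2 h
      · exact Or.inl h
      · exact Or.inr (GposB x h)
    rcases hpos with h | h
    · exact ⟨le_of_eq (h ▸ hGPt.symm), fun _ => Or.inr h⟩
    · exact ⟨h.le, fun he => absurd he h.ne'⟩

end Stmt14Aux2

namespace Stmt14MT
open MeasureTheory

lemma integrable_dirac'' (φ : ℝ → ℝ) (x : ℝ) : Integrable φ (Measure.dirac x) := by
  refine (integrable_const (φ x)).congr ?_
  rw [MeasureTheory.ae_dirac_eq]
  exact Filter.eventually_pure.2 rfl

lemma integrable_two_point (a b : ENNReal) (ha : a ≠ ⊤) (hb : b ≠ ⊤) (x y : ℝ) (φ : ℝ → ℝ) :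
    Integrable φ (a • Measure.dirac x + b • Measure.dirac y) :=
  ((integrable_dirac'' φ x).smul_measure ha).add_measure
    ((integrable_dirac'' φ y).smul_measure hb)

lemma integral_two_point (a b : ENNReal) (ha : a ≠ ⊤) (hb : b ≠ ⊤) (x y : ℝ) (φ : ℝ → ℝ) :
    ∫ z, φ z ∂(a • Measure.dirac x + b • Measure.dirac y)
      = a.toReal * φ x + b.toReal * φ y := by
  rw [integral_add_measure ((integrable_dirac'' φ x).smul_measure ha)
      ((integrable_dirac'' φ y).smul_measure hb),
    integral_smul_measure, integral_smul_measure, integral_dirac, integral_dirac]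
  simp [smul_eq_mul]

end Stmt14MT

open MeasureTheory Stmt14Aux Stmt14Aux2 Stmt14MT

set_option maxHeartbeats 1000000
open MeasureTheory

theorem stmt14 (α PFA : ℝ) (hα : 0 < α) (hPFA0 : 0 < PFA) (hPFA1 : PFA < Real.exp (-2))
    (f : ℝ → ℝ) (hf : f = fun P : ℝ => Real.exp (Real.log PFA / (1 + α * P)))
    (Pt : ℝ) (hPt : 0 < Pt) (htangent : f Pt - f 0 = deriv f Pt * Pt)
    (P : ℝ) (hP0 : 0 < P) (hPPt : P < Pt)
    (μstar : Measure ℝ)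
    (hμstar : μstar = ENNReal.ofReal (1 - P / Pt) • Measure.dirac (0 : ℝ)
        + ENNReal.ofReal (P / Pt) • Measure.dirac Pt) :
    (IsProbabilityMeasure μstar ∧ μstar (Set.Iio 0) = 0 ∧
      Integrable (fun ξ : ℝ => ξ) μstar ∧ (∫ ξ, ξ ∂μstar) ≤ P ∧
      (∀ ν : Measure ℝ, IsProbabilityMeasure ν → ν (Set.Iio 0) = 0 →
        Integrable (fun ξ : ℝ => ξ) ν → (∫ ξ, ξ ∂ν) ≤ P →
        (∫ ξ, f ξ ∂ν) ≤ ∫ ξ, f ξ ∂μstar)) ∧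
    (∀ μ : Measure ℝ, IsProbabilityMeasure μ → μ (Set.Iio 0) = 0 →
      Integrable (fun ξ : ℝ => ξ) μ → (∫ ξ, ξ ∂μ) ≤ P →
      (∀ ν : Measure ℝ, IsProbabilityMeasure ν → ν (Set.Iio 0) = 0 →
        Integrable (fun ξ : ℝ => ξ) ν → (∫ ξ, ξ ∂ν) ≤ P →
        (∫ ξ, f ξ ∂ν) ≤ ∫ ξ, f ξ ∂μ) →
      μ = μstar) := by
  set L : ℝ := Real.log PFA with hLdef
  have hL : L < -2 := by
    have := Real.log_lt_log hPFA0 hPFA1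
    rwa [Real.log_exp] at this
  have hfF : f = F α L := hf
  have hsx : ∀ x : ℝ, 0 ≤ x → (0:ℝ) < 1 + α * x := fun x hx => by nlinarith
  have hsPt : (0:ℝ) < 1 + α * Pt := hsx Pt hPt.le
  have hderivf : deriv f Pt = F1 α L Pt := by
    rw [hfF]; exact (hasDerivAt_F (ne_of_gt hsPt)).deriv
  have htan' : F α L Pt - F α L 0 = F1 α L Pt * Pt := by
    rw [← hfF, ← hderivf]; exact htangent
  set c : ℝ := F1 α L Pt with hcdef
  have hc : 0 < c := by
    rw [hcdef]
    exact mul_pos (Real.exp_pos _)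
      (div_pos (by nlinarith) (by positivity))
  have hkey := Stmt14Aux2.key α L hα hL Pt hPt htan'
  have hθ0 : 0 ≤ P / Pt := le_of_lt (div_pos hP0 hPt)
  have hθ1 : P / Pt ≤ 1 := by
    rw [div_le_one hPt]; exact hPPt.le
  have hne1 : (ENNReal.ofReal (1 - P / Pt)) ≠ ⊤ := ENNReal.ofReal_ne_top
  have hne2 : (ENNReal.ofReal (P / Pt)) ≠ ⊤ := ENNReal.ofReal_ne_top
  have htoR1 : (ENNReal.ofReal (1 - P / Pt)).toReal = 1 - P / Pt :=
    ENNReal.toReal_ofReal (by linarith)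
  have htoR2 : (ENNReal.ofReal (P / Pt)).toReal = P / Pt :=
    ENNReal.toReal_ofReal hθ0
  have hθPt : P / Pt * Pt = P := div_mul_cancel₀ _ (ne_of_gt hPt)
  -- Probability measure
  have hprob : IsProbabilityMeasure μstar := by
    constructor
    rw [hμstar]
    simp only [Measure.coe_add, Pi.add_apply, Measure.smul_apply, smul_eq_mul,
      Measure.dirac_apply_of_mem (Set.mem_univ _), mul_one]
    rw [← ENNReal.ofReal_add (by linarith) hθ0, sub_add_cancel, ENNReal.ofReal_one]
  have hIio0 : μstar (Set.Iio 0) = 0 := by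
    rw [hμstar]
    simp only [Measure.coe_add, Pi.add_apply, Measure.smul_apply, smul_eq_mul,
      Measure.dirac_apply' _ measurableSet_Iio]
    rw [Set.indicator_of_notMem (by simp), Set.indicator_of_notMem (by simp [asymm hPt])]
    simp
  have hintμstar : Integrable (fun ξ : ℝ => ξ) μstar := by
    rw [hμstar]; exact integrable_two_point _ _ hne1 hne2 _ _ _
  have hmeanμstar : (∫ ξ, ξ ∂μstar) = P := by
    rw [hμstar, integral_two_point _ _ hne1 hne2, htoR1, htoR2]
    simp [hθPt]
  have hIμstar : (∫ ξ, f ξ ∂μstar) = F α L 0 + c * P := by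
    rw [hμstar, hfF, integral_two_point _ _ hne1 hne2, htoR1, htoR2]
    linear_combination (P / Pt) * htan' + c * hθPt
  -- generic facts about feasible measures
  have haeν : ∀ ν : Measure ℝ, ν (Set.Iio 0) = 0 → ∀ᵐ ξ ∂ν, 0 ≤ ξ := by
    intro ν hν
    rw [MeasureTheory.ae_iff]
    simp only [not_le]; exact hν
  have hfm : Measurable f := by
    rw [hf]
    exact Real.measurable_exp.comp (measurable_const.div ((measurable_id.const_mul α).const_add 1))
  have hfintν : ∀ ν : Measure ℝ, IsProbabilityMeasure ν → ν (Set.Iio 0) = 0 →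
      Integrable f ν := by
    intro ν hνp hν
    haveI := hνp
    refine Integrable.mono' (integrable_const 1) hfm.aestronglyMeasurable ?_
    filter_upwards [haeν ν hν] with ξ hξ
    rw [hf]
    rw [Real.norm_eq_abs, abs_of_pos (Real.exp_pos _)]
    have h1 : L / (1 + α * ξ) ≤ 0 :=
      div_nonpos_of_nonpos_of_nonneg (by linarith) (hsx ξ hξ).le
    calc Real.exp (L / (1 + α * ξ)) ≤ Real.exp 0 := Real.exp_le_exp.2 h1
      _ = 1 := Real.exp_zero
  have hopt : ∀ ν : Measure ℝ, IsProbabilityMeasure ν → ν (Set.Iio 0) = 0 →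
      Integrable (fun ξ : ℝ => ξ) ν → (∫ ξ, ξ ∂ν) ≤ P →
      (∫ ξ, f ξ ∂ν) ≤ F α L 0 + c * P := by
    intro ν hνp hν hνint hνmean
    haveI := hνp
    have hlin : Integrable (fun ξ : ℝ => F α L 0 + c * ξ) ν :=
      (integrable_const _).add (hνint.const_mul c)
    have h1 : (∫ ξ, f ξ ∂ν) ≤ ∫ ξ, F α L 0 + c * ξ ∂ν := by
      refine integral_mono_ae (hfintν ν hνp hν) hlin ?_
      filter_upwards [haeν ν hν] with ξ hξ
      have := (hkey ξ hξ).1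
      rw [hfF]
      simp only [G] at this
      linarith
    have h2 : (∫ ξ, F α L 0 + c * ξ ∂ν) = F α L 0 + c * ∫ ξ, ξ ∂ν := by
      rw [integral_add (integrable_const _) (hνint.const_mul c), integral_const,
        integral_const_mul]
      simp
    rw [h2] at h1
    nlinarith [h1, hνmean, hc]
  refine ⟨⟨hprob, hIio0, hintμstar, le_of_eq hmeanμstar, ?_⟩, ?_⟩
  · intro ν hνp hν hνint hνmean
    rw [hIμstar]
    exact hopt ν hνp hν hνint hνmean
  · intro μ hμp hμIio hμint hμmean hμopt
    haveI := hμp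
    have hfintμ := hfintν μ hμp hμIio
    have hIμ : (∫ ξ, f ξ ∂μ) = F α L 0 + c * P := by
      refine le_antisymm (hopt μ hμp hμIio hμint hμmean) ?_
      have := hμopt μstar hprob hIio0 hintμstar (le_of_eq hmeanμstar)
      rwa [hIμstar] at this
    have hlinμ : Integrable (fun ξ : ℝ => F α L 0 + c * ξ) μ :=
      (integrable_const _).add (hμint.const_mul c)
    have hGint : Integrable (fun ξ : ℝ => F α L 0 + c * ξ - f ξ) μ := hlinμ.sub hfintμ
    have hGae : 0 ≤ᵐ[μ] fun ξ : ℝ => F α L 0 + c * ξ - f ξ := by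
      filter_upwards [haeν μ hμIio] with ξ hξ
      have := (hkey ξ hξ).1
      simp only [G] at this
      rw [hfF]
      simpa using this
    have hGval : (∫ ξ, F α L 0 + c * ξ - f ξ ∂μ) = c * (∫ ξ, ξ ∂μ) - c * P := by
      rw [integral_sub hlinμ hfintμ,
        integral_add (integrable_const _) (hμint.const_mul c), integral_const,
        integral_const_mul, hIμ]
      simp only [probReal_univ, measure_univ, ENNReal.toReal_one, smul_eq_mul, one_mul]
      ring
    have hGnonneg : 0 ≤ ∫ ξ, F α L 0 + c * ξ - f ξ ∂μ := integral_nonneg_of_ae hGae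
    have hmean_eq : (∫ ξ, ξ ∂μ) = P := by nlinarith [hGval, hGnonneg, hμmean, hc]
    have hGzero : (∫ ξ, F α L 0 + c * ξ - f ξ ∂μ) = 0 := by rw [hGval, hmean_eq]; ring
    have hG0ae : (fun ξ : ℝ => F α L 0 + c * ξ - f ξ) =ᵐ[μ] 0 :=
      (integral_eq_zero_iff_of_nonneg_ae hGae hGint).mp hGzero
    have hsupp : ∀ᵐ ξ ∂μ, ξ = 0 ∨ ξ = Pt := by
      filter_upwards [hG0ae, haeν μ hμIio] with ξ h1 h2
      refine (hkey ξ h2).2 ?_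
      simp only [Pi.zero_apply] at h1
      rw [hfF] at h1
      simp only [G]
      exact h1
    have hcompl : μ ({0, Pt} : Set ℝ)ᶜ = 0 := by
      have h := hsupp
      rw [MeasureTheory.ae_iff] at h
      have he : ({0, Pt} : Set ℝ)ᶜ = {a : ℝ | ¬(a = 0 ∨ a = Pt)} := by
        ext z; simp
      rw [he]
      exact h
    have hmeas01 : MeasurableSet ({0, Pt} : Set ℝ) :=
      (measurableSet_singleton Pt).insert 0
    have hμ0ne : μ {0} ≠ ⊤ := measure_ne_top μ _
    have hμPtne : μ {Pt} ≠ ⊤ := measure_ne_top μ _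
    have hrepr : μ = μ {0} • Measure.dirac 0 + μ {Pt} • Measure.dirac Pt := by
      ext t ht
      have hts : μ t = μ (t ∩ {0, Pt}) := by
        have h1 := measure_inter_add_diff (μ := μ) t hmeas01
        have h2 : μ (t \ ({0, Pt} : Set ℝ)) = 0 :=
          measure_mono_null (fun z hz => hz.2) hcompl
        rw [← h1, h2, add_zero]
      have hsplit : t ∩ ({0, Pt} : Set ℝ) = (t ∩ {0}) ∪ (t ∩ {Pt}) := by
        rw [show ({0, Pt} : Set ℝ) = {0} ∪ {Pt} from rfl, Set.inter_union_distrib_left]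
      have hdisj : Disjoint (t ∩ ({0} : Set ℝ)) (t ∩ {Pt}) := by
        refine Set.disjoint_left.2 fun z hz1 hz2 => ?_
        have e1 : z = 0 := hz1.2
        have e2 : z = Pt := hz2.2
        exact absurd (e1 ▸ e2) (ne_of_lt hPt)
      rw [hts, hsplit, measure_union hdisj (ht.inter (measurableSet_singleton Pt))]
      simp only [Measure.coe_add, Pi.add_apply, Measure.smul_apply, smul_eq_mul,
        Measure.dirac_apply' _ ht]
      by_cases h0 : (0:ℝ) ∈ t <;> by_cases hp : Pt ∈ t
      · rw [Set.inter_eq_self_of_subset_right (Set.singleton_subset_iff.2 h0),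
          Set.inter_eq_self_of_subset_right (Set.singleton_subset_iff.2 hp),
          Set.indicator_of_mem h0, Set.indicator_of_mem hp]
        simp
      · rw [Set.inter_eq_self_of_subset_right (Set.singleton_subset_iff.2 h0),
          Set.inter_singleton_eq_empty.2 hp,
          Set.indicator_of_mem h0, Set.indicator_of_notMem hp]
        simp
      · rw [Set.inter_eq_self_of_subset_right (Set.singleton_subset_iff.2 hp),
          Set.inter_singleton_eq_empty.2 h0,
          Set.indicator_of_notMem h0, Set.indicator_of_mem hp]
        simp
      · rw [Set.inter_singleton_eq_empty.2 h0, Set.inter_singleton_eq_empty.2 hp,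
          Set.indicator_of_notMem h0, Set.indicator_of_notMem hp]
        simp
    have htot : μ {0} + μ {Pt} = 1 := by
      have h := hμp.measure_univ
      rw [hrepr] at h
      simpa using h
    have hmean2 : (μ {Pt}).toReal * Pt = P := by
      have h : (∫ ξ, ξ ∂μ) = (μ {0}).toReal * 0 + (μ {Pt}).toReal * Pt := by
        conv_lhs => rw [hrepr]
        rw [integral_two_point _ _ hμ0ne hμPtne]
      rw [hmean_eq] at h
      linarith
    have hb : μ {Pt} = ENNReal.ofReal (P / Pt) := by
      have h1 : (μ {Pt}).toReal = P / Pt := by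
        rw [eq_div_iff (ne_of_gt hPt)]; exact hmean2
      rw [← ENNReal.ofReal_toReal hμPtne, h1]
    have ha : μ {0} = ENNReal.ofReal (1 - P / Pt) := by
      have h2 : μ {0} = 1 - ENNReal.ofReal (P / Pt) :=
        ENNReal.eq_sub_of_add_eq hne2 (by rw [← hb]; exact htot)
      rw [h2, ENNReal.ofReal_sub _ hθ0, ENNReal.ofReal_one]
    rw [hμstar, ← ha, ← hb]
    exact hrepr
end

section
/- Fix α > 0 and P_FA ∈ (0, e^{−2}), define f : [0,∞) → ℝ by f(P) = exp(ln(P_FA)/(1 + αP)), and let P_t > 0 be the unique positive real with f(P_t) − f(0) = f′(P_t)·P_t. Then for every P ≥ P_t, the supremum of ∫ f dμ over all Borel probability measures μ on [0,∞) satisfying ∫ ξ dμ(ξ) ≤ P equals f(P), and it is attained by the Dirac measure δ_P. -/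
open MeasureTheory Real

noncomputable def aux15F (α L t : ℝ) : ℝ := Real.exp (L / (1 + α * t))
noncomputable def aux15F1 (α L t : ℝ) : ℝ :=
  Real.exp (L / (1 + α * t)) * (-(L * α) / (1 + α * t) ^ 2)
noncomputable def aux15F2 (α L t : ℝ) : ℝ :=
  Real.exp (L / (1 + α * t)) * (L * α ^ 2 * (L + 2 * (1 + α * t)) / (1 + α * t) ^ 4)

lemma aux15d1 (α L x : ℝ) (hx : 1 + α * x ≠ 0) :
    HasDerivAt (aux15F α L) (aux15F1 α L x) x := by
  have hu : HasDerivAt (fun t : ℝ => 1 + α * t) α x := by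
    simpa using ((hasDerivAt_id x).const_mul α).const_add 1
  have hq : HasDerivAt (fun t : ℝ => L / (1 + α * t)) (-(L * α) / (1 + α * x) ^ 2) x := by
    have h := (hasDerivAt_const x L).fun_div hu hx
    refine h.congr_deriv ?_
    ring
  exact hq.exp

lemma aux15d2 (α L x : ℝ) (hx : 1 + α * x ≠ 0) :
    HasDerivAt (aux15F1 α L) (aux15F2 α L x) x := by
  have hu : HasDerivAt (fun t : ℝ => 1 + α * t) α x := by
    simpa using ((hasDerivAt_id x).const_mul α).const_add 1
  have hq : HasDerivAt (fun t : ℝ => L / (1 + α * t)) (-(L * α) / (1 + α * x) ^ 2) x := by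
    have h := (hasDerivAt_const x L).fun_div hu hx
    refine h.congr_deriv ?_
    ring
  have he : HasDerivAt (fun t : ℝ => Real.exp (L / (1 + α * t)))
      (Real.exp (L / (1 + α * x)) * (-(L * α) / (1 + α * x) ^ 2)) x := hq.exp
  have hden : HasDerivAt (fun t : ℝ => (1 + α * t) ^ 2) (2 * (1 + α * x) ^ 1 * α) x := by
    simpa using hu.fun_pow 2
  have hg : HasDerivAt (fun t : ℝ => -(L * α) / (1 + α * t) ^ 2)
      ((0 * (1 + α * x) ^ 2 - -(L * α) * (2 * (1 + α * x) ^ 1 * α)) / ((1 + α * x) ^ 2) ^ 2) x :=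
    (hasDerivAt_const x (-(L * α))).fun_div hden (pow_ne_zero 2 hx)
  have h := he.fun_mul hg
  unfold aux15F1 aux15F2
  refine h.congr_deriv ?_
  field_simp
  ring

lemma aux15key (α L : ℝ) (hα : 0 < α) (hL : L < -2) (Pt : ℝ) (hPt : 0 < Pt)
    (htang : aux15F α L Pt - aux15F α L 0 = aux15F1 α L Pt * Pt)
    (P x : ℝ) (hP : Pt ≤ P) (hx : 0 ≤ x) :
    aux15F α L x ≤ aux15F α L P + aux15F1 α L P * (x - P) := by
  set xs : ℝ := (-L / 2 - 1) / α with hxs_def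
  have hxs : 0 < xs := by
    apply div_pos _ hα
    linarith
  have hupos : ∀ t : ℝ, 0 ≤ t → (0:ℝ) < 1 + α * t := fun t ht => by nlinarith
  have hune : ∀ t : ℝ, 0 ≤ t → (1 + α * t) ≠ 0 := fun t ht => (hupos t ht).ne'
  -- second derivative signs
  have hF2pos : ∀ t : ℝ, 0 ≤ t → t < xs → 0 < aux15F2 α L t := by
    intro t ht htxs
    have hu := hupos t ht
    have h2u : 2 * (1 + α * t) < -L := by
      have h := (lt_div_iff₀ hα).mp htxs
      nlinarith
    apply mul_pos (Real.exp_pos _)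
    apply div_pos _ (by positivity)
    have h3 : 0 < (-L) * (-(L + 2 * (1 + α * t))) := mul_pos (by linarith) (by linarith)
    have heq : L * α ^ 2 * (L + 2 * (1 + α * t)) = ((-L) * (-(L + 2 * (1 + α * t)))) * α ^ 2 := by
      ring
    rw [heq]
    positivity
  have hF2nonpos : ∀ t : ℝ, xs ≤ t → aux15F2 α L t ≤ 0 := by
    intro t ht
    have ht0 : 0 ≤ t := le_trans hxs.le ht
    have hu := hupos t ht0
    have h2u : -L ≤ 2 * (1 + α * t) := by
      have := (div_le_iff₀ hα).mp ht
      nlinarith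
    apply mul_nonpos_of_nonneg_of_nonpos (Real.exp_pos _).le
    apply div_nonpos_of_nonpos_of_nonneg _ (by positivity)
    have h3 : L * (L + 2 * (1 + α * t)) ≤ 0 :=
      mul_nonpos_of_nonpos_of_nonneg (by linarith) (by linarith)
    have heq : L * α ^ 2 * (L + 2 * (1 + α * t)) = (L * (L + 2 * (1 + α * t))) * α ^ 2 := by ring
    rw [heq]
    exact mul_nonpos_of_nonpos_of_nonneg h3 (sq_nonneg α)
  -- φ and its derivative
  set φ : ℝ → ℝ := fun t => aux15F α L t - aux15F α L 0 - aux15F1 α L t * t with hφ_def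
  have hφd : ∀ t : ℝ, 0 ≤ t → HasDerivAt φ
      (aux15F1 α L t - (aux15F2 α L t * t + aux15F1 α L t * 1)) t := by
    intro t ht
    exact ((aux15d1 α L t (hune t ht)).sub_const _).sub
      ((aux15d2 α L t (hune t ht)).mul (hasDerivAt_id t))
  have hφ0 : φ 0 = 0 := by simp [hφ_def]
  have hφPt : φ Pt = 0 := by simp [hφ_def]; linarith [htang]
  -- Pt is beyond the inflection point
  have hPtxs : xs ≤ Pt := by
    by_contra hcon
    push_neg at hcon
    have hanti : StrictAntiOn φ (Set.Icc 0 xs) := by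
      apply strictAntiOn_of_hasDerivWithinAt_neg (convex_Icc 0 xs)
      · intro t ht
        exact ((hφd t ht.1).continuousAt).continuousWithinAt
      · intro t ht
        rw [interior_Icc] at ht
        exact ((hφd t ht.1.le).hasDerivWithinAt)
      · intro t ht
        rw [interior_Icc] at ht
        have := hF2pos t ht.1.le ht.2
        nlinarith [ht.1]
    have := hanti (Set.mem_Icc.mpr ⟨le_refl 0, hxs.le⟩)
      (Set.mem_Icc.mpr ⟨hPt.le, hcon.le⟩) hPt
    rw [hφ0, hφPt] at this
    exact absurd this (lt_irrefl 0)
  -- φ is monotone on [xs, ∞)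
  have hφmono : MonotoneOn φ (Set.Ici xs) := by
    apply monotoneOn_of_hasDerivWithinAt_nonneg (convex_Ici xs)
    · intro t ht
      exact ((hφd t (le_trans hxs.le ht)).continuousAt).continuousWithinAt
    · intro t ht
      rw [interior_Ici] at ht
      exact (hφd t (le_trans hxs.le ht.le)).hasDerivWithinAt
    · intro t ht
      rw [interior_Ici] at ht
      have h1 := hF2nonpos t ht.le
      have h2 : 0 < t := lt_of_le_of_lt hxs.le ht
      nlinarith
  have hφP : 0 ≤ φ P := by
    have := hφmono (Set.mem_Ici.mpr hPtxs) (Set.mem_Ici.mpr (le_trans hPtxs hP)) hP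
    rw [hφPt] at this
    exact this
  have hh0 : aux15F α L 0 ≤ aux15F α L P + aux15F1 α L P * (0 - P) := by
    have : φ P = aux15F α L P - aux15F α L 0 - aux15F1 α L P * P := rfl
    rw [this] at hφP
    nlinarith
  -- F1 is antitone on [xs, ∞)
  have hF1anti : AntitoneOn (aux15F1 α L) (Set.Ici xs) := by
    apply antitoneOn_of_hasDerivWithinAt_nonpos (convex_Ici xs)
    · intro t ht
      exact ((aux15d2 α L t (hune t (le_trans hxs.le ht))).continuousAt).continuousWithinAt
    · intro t ht
      rw [interior_Ici] at ht
      exact (aux15d2 α L t (hune t (le_trans hxs.le ht.le))).hasDerivWithinAt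
    · intro t ht
      rw [interior_Ici] at ht
      exact hF2nonpos t ht.le
  have hPxs : xs ≤ P := le_trans hPtxs hP
  -- tangent majorization on [xs, ∞)
  have hconc : ∀ z : ℝ, xs ≤ z → aux15F α L z ≤ aux15F α L P + aux15F1 α L P * (z - P) := by
    intro z hz
    set ψ : ℝ → ℝ := fun t => aux15F α L P + aux15F1 α L P * (t - P) - aux15F α L t with hψ_def
    have hψd : ∀ t : ℝ, 0 ≤ t → HasDerivAt ψ (aux15F1 α L P * 1 - aux15F1 α L t) t := by
      intro t ht
      exact ((((hasDerivAt_id t).sub_const P).const_mul (aux15F1 α L P)).const_add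
        (aux15F α L P)).sub (aux15d1 α L t (hune t ht))
    have hψP : ψ P = 0 := by simp [hψ_def]
    rcases le_total z P with hzP | hPz
    · have hanti : AntitoneOn ψ (Set.Icc xs P) := by
        apply antitoneOn_of_hasDerivWithinAt_nonpos (convex_Icc xs P)
        · intro t ht
          exact ((hψd t (le_trans hxs.le ht.1)).continuousAt).continuousWithinAt
        · intro t ht
          rw [interior_Icc] at ht
          exact (hψd t (le_trans hxs.le ht.1.le)).hasDerivWithinAt
        · intro t ht
          rw [interior_Icc] at ht
          have := hF1anti (Set.mem_Ici.mpr ht.1.le) (Set.mem_Ici.mpr hPxs) ht.2.le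
          linarith
      have := hanti (Set.mem_Icc.mpr ⟨hz, hzP⟩) (Set.mem_Icc.mpr ⟨hPxs, le_refl P⟩) hzP
      rw [hψP] at this
      have hψz : ψ z = aux15F α L P + aux15F1 α L P * (z - P) - aux15F α L z := rfl
      linarith
    · have hmono : MonotoneOn ψ (Set.Ici P) := by
        apply monotoneOn_of_hasDerivWithinAt_nonneg (convex_Ici P)
        · intro t ht
          exact ((hψd t (le_trans (le_trans hxs.le hPxs) ht)).continuousAt).continuousWithinAt
        · intro t ht
          rw [interior_Ici] at ht
          exact (hψd t (le_trans (le_trans hxs.le hPxs) ht.le)).hasDerivWithinAt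
        · intro t ht
          rw [interior_Ici] at ht
          have := hF1anti (Set.mem_Ici.mpr hPxs) (Set.mem_Ici.mpr (le_trans hPxs ht.le)) ht.le
          linarith
      have := hmono (Set.mem_Ici.mpr (le_refl P)) (Set.mem_Ici.mpr hPz) hPz
      rw [hψP] at this
      have hψz : ψ z = aux15F α L P + aux15F1 α L P * (z - P) - aux15F α L z := rfl
      linarith
  rcases le_or_gt xs x with h | h
  · exact hconc x h
  -- convex part: x ∈ [0, xs)
  have hconv : ConvexOn ℝ (Set.Icc 0 xs) (aux15F α L) := by
    apply convexOn_of_hasDerivWithinAt2_nonneg (convex_Icc 0 xs)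
      (f' := aux15F1 α L) (f'' := aux15F2 α L)
    · intro t ht
      exact ((aux15d1 α L t (hune t ht.1)).continuousAt).continuousWithinAt
    · intro t ht
      rw [interior_Icc] at ht
      exact (aux15d1 α L t (hune t ht.1.le)).hasDerivWithinAt
    · intro t ht
      rw [interior_Icc] at ht
      exact (aux15d2 α L t (hune t ht.1.le)).hasDerivWithinAt
    · intro t ht
      rw [interior_Icc] at ht
      exact (hF2pos t ht.1.le ht.2).le
  have hxsne : xs ≠ 0 := hxs.ne'
  set a : ℝ := (xs - x) / xs with ha_def
  set b : ℝ := x / xs with hb_def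
  have ha : 0 ≤ a := div_nonneg (by linarith) hxs.le
  have hb : 0 ≤ b := div_nonneg hx hxs.le
  have hab : a + b = 1 := by rw [ha_def, hb_def]; field_simp; ring
  have hcomb : a * 0 + b * xs = x := by rw [ha_def, hb_def]; field_simp; ring
  have hmem0 : (0:ℝ) ∈ Set.Icc (0:ℝ) xs := Set.mem_Icc.mpr ⟨le_refl 0, hxs.le⟩
  have hmemxs : xs ∈ Set.Icc (0:ℝ) xs := Set.mem_Icc.mpr ⟨hxs.le, le_refl xs⟩
  have hcx := hconv.2 hmem0 hmemxs ha hb hab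
  simp only [smul_eq_mul] at hcx
  rw [hcomb] at hcx
  have hhxs : aux15F α L xs ≤ aux15F α L P + aux15F1 α L P * (xs - P) := hconc xs (le_refl xs)
  have e1 : a * aux15F α L 0 ≤ a * (aux15F α L P + aux15F1 α L P * (0 - P)) :=
    mul_le_mul_of_nonneg_left hh0 ha
  have e2 : b * aux15F α L xs ≤ b * (aux15F α L P + aux15F1 α L P * (xs - P)) :=
    mul_le_mul_of_nonneg_left hhxs hb
  have efin : a * (aux15F α L P + aux15F1 α L P * (0 - P)) +
      b * (aux15F α L P + aux15F1 α L P * (xs - P)) =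
      aux15F α L P + aux15F1 α L P * (x - P) := by
    have h1 : a * 0 + b * xs = x := hcomb
    linear_combination (aux15F α L P - aux15F1 α L P * P) * hab + aux15F1 α L P * h1
  linarith

lemma aux15F1nonneg (α L P : ℝ) (hα : 0 < α) (hL : L < 0) (hP : 0 ≤ P) :
    0 ≤ aux15F1 α L P := by
  unfold aux15F1
  have hu : (0:ℝ) < 1 + α * P := by nlinarith
  have : 0 < -(L * α) := by nlinarith
  positivity

theorem stmt15 (α PFA : ℝ) (hα : 0 < α) (hPFA0 : 0 < PFA) (hPFA1 : PFA < Real.exp (-2))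
    (f : ℝ → ℝ) (hf : f = fun P : ℝ => Real.exp (Real.log PFA / (1 + α * P)))
    (Pt : ℝ) (hPt : 0 < Pt) (htangent : f Pt - f 0 = deriv f Pt * Pt)
    (P : ℝ) (hP : Pt ≤ P) :
    IsLUB {r : ℝ | ∃ μ : Measure ℝ, IsProbabilityMeasure μ ∧ μ (Set.Iio 0) = 0 ∧
        Integrable (fun ξ : ℝ => ξ) μ ∧ (∫ ξ, ξ ∂μ) ≤ P ∧ r = ∫ ξ, f ξ ∂μ}
      (f P) ∧
    (IsProbabilityMeasure (Measure.dirac P) ∧ (Measure.dirac P) (Set.Iio (0:ℝ)) = 0 ∧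
      Integrable (fun ξ : ℝ => ξ) (Measure.dirac P) ∧
      (∫ ξ, ξ ∂(Measure.dirac P)) ≤ P ∧
      (∫ ξ, f ξ ∂(Measure.dirac P)) = f P) := by
  set L : ℝ := Real.log PFA with hLdef
  have hL : L < -2 := by
    have := Real.log_lt_log hPFA0 hPFA1
    rwa [Real.log_exp] at this
  have hfF : f = aux15F α L := by rw [hf]; rfl
  have hP0 : 0 < P := lt_of_lt_of_le hPt hP
  have hune : ∀ t : ℝ, 0 ≤ t → (1 + α * t) ≠ 0 := fun t ht => by nlinarith
  have hderiv : deriv f Pt = aux15F1 α L Pt := by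
    rw [hfF]
    exact (aux15d1 α L Pt (hune Pt hPt.le)).deriv
  have htang : aux15F α L Pt - aux15F α L 0 = aux15F1 α L Pt * Pt := by
    rw [← hfF, ← hderiv]; exact htangent
  have hkey : ∀ x : ℝ, 0 ≤ x → f x ≤ f P + aux15F1 α L P * (x - P) := by
    intro x hx
    rw [hfF]
    exact aux15key α L hα hL Pt hPt htang P x hP hx
  have hb : 0 ≤ aux15F1 α L P := aux15F1nonneg α L P hα (by linarith) hP0.le
  have hfmeas : Measurable f := by
    rw [hf]
    exact (measurable_const.div ((measurable_const.add (measurable_id.const_mul α)))).exp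
  have hfbound : ∀ x : ℝ, 0 ≤ x → f x ≤ 1 := by
    intro x hx
    rw [hf]
    have hu : (0:ℝ) < 1 + α * x := by nlinarith
    exact Real.exp_le_one_iff.mpr (div_nonpos_of_nonpos_of_nonneg (by linarith) hu.le)
  have hfpos : ∀ x : ℝ, 0 < f x := by
    intro x
    rw [hf]
    exact Real.exp_pos _
  -- upper bound for any admissible measure
  have hub : ∀ μ : Measure ℝ, IsProbabilityMeasure μ → μ (Set.Iio 0) = 0 →
      Integrable (fun ξ : ℝ => ξ) μ → (∫ ξ, ξ ∂μ) ≤ P → (∫ ξ, f ξ ∂μ) ≤ f P := by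
    intro μ hμ h0 hint hmean
    have hae : ∀ᵐ x ∂μ, 0 ≤ x := by
      rw [ae_iff]
      convert h0 using 2
      ext y
      simp [not_le]
    have hintf : Integrable f μ := by
      apply Integrable.mono' (integrable_const (1:ℝ)) hfmeas.aestronglyMeasurable
      filter_upwards [hae] with x hx
      rw [Real.norm_eq_abs, abs_of_pos (hfpos x)]
      exact hfbound x hx
    have h1 : Integrable (fun x : ℝ => x - P) μ := by
      exact hint.sub (integrable_const P)
    have h2 : Integrable (fun x : ℝ => aux15F1 α L P * (x - P)) μ := h1.const_mul _
    have hinth : Integrable (fun x : ℝ => f P + aux15F1 α L P * (x - P)) μ := by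
      simpa using (integrable_const (f P)).add h2
    have hle : (∫ ξ, f ξ ∂μ) ≤ ∫ x, (f P + aux15F1 α L P * (x - P)) ∂μ := by
      apply integral_mono_ae hintf hinth
      filter_upwards [hae] with x hx
      exact hkey x hx
    have heq : ∫ x, (f P + aux15F1 α L P * (x - P)) ∂μ
        = f P + aux15F1 α L P * ((∫ x, x ∂μ) - P) := by
      rw [integral_add (integrable_const _) h2,
        integral_const, integral_const_mul, integral_sub hint (integrable_const P),
        integral_const]
      simp [measure_univ]
    rw [heq] at hle
    have : aux15F1 α L P * ((∫ x, x ∂μ) - P) ≤ 0 :=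
      mul_nonpos_of_nonneg_of_nonpos hb (by linarith)
    linarith
  -- dirac facts
  have hdirac_int : (∫ ξ, f ξ ∂(Measure.dirac P)) = f P := integral_dirac f P
  have hdirac_id : (∫ ξ, ξ ∂(Measure.dirac P)) = P := integral_dirac (fun ξ : ℝ => ξ) P
  have hdirac_prob : IsProbabilityMeasure (Measure.dirac P) := inferInstance
  have hdirac0 : (Measure.dirac P) (Set.Iio (0:ℝ)) = 0 := by
    rw [Measure.dirac_apply' _ measurableSet_Iio]
    simp [Set.indicator_of_notMem, not_lt.mpr hP0.le]
  have hdirac_intgr : Integrable (fun ξ : ℝ => ξ) (Measure.dirac P) := by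
    refine ⟨measurable_id.aestronglyMeasurable, ?_⟩
    simp [HasFiniteIntegral, lintegral_dirac]
  refine ⟨⟨?_, ?_⟩, hdirac_prob, hdirac0, hdirac_intgr, le_of_eq hdirac_id, hdirac_int⟩
  · rintro r ⟨μ, hμ, h0, hint, hmean, rfl⟩
    exact hub μ hμ h0 hint hmean
  · intro b hbub
    exact hbub ⟨Measure.dirac P, hdirac_prob, hdirac0, hdirac_intgr, le_of_eq hdirac_id,
      hdirac_int.symm⟩
end
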